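/- arXiv:2602.09119 — 9 statements merged into one kernel-verified Lean document; each statement's English description precedes it below -/
import Mathlib

section
/- Let T ≥ 1, K ∈ {1, …, T−1}, and let f ∈ ℂ^T contain a run of K consecutive zeros starting at an index s ≥ 1, i.e. f_i = 0 для all i ∈ {s, …, s+K−1}, with s + K ≤ T − 1. For any φ ∈ (0, 2π), define g ∈ ℂ^T by g_i = f_i for i < s+K and g_i = e^{iφ} f_i for i ≥ s+K. Then g_i · conj(g_j) = f_i · conj(f_j) for all indices with |i − j| ≤ K; moreover, if f_i ≠ 0 for some i ≥ s+K, then g ≠ f. Hence a signal containing a run of K consecutive zeros is not uniquely determined by the K-band of its lifted matrix. -/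
lemma exp_ne_one_aux (φ : ℝ) (hφ0 : 0 < φ) (hφ2 : φ < 2 * Real.pi) :
    Complex.exp (φ * Complex.I) ≠ 1 := by
  intro h
  rw [Complex.exp_eq_one_iff] at h
  obtain ⟨n, hn⟩ := h
  have hφ : φ = n * (2 * Real.pi) := by
    have h2 := congrArg Complex.im hn
    simpa using h2
  have hpi : (0:ℝ) < 2 * Real.pi := by positivity
  rcases lt_trichotomy (n : ℝ) 1 with h1 | h1 | h1
  · have : (n : ℝ) ≤ 0 := by
      have : (n : ℤ) < 1 := by exact_mod_cast h1
      exact_mod_cast Int.lt_add_one_iff.mp (by omega)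
    nlinarith
  · nlinarith
  · nlinarith

/-- **Non-identifiability with a run of `K` zeros.**  If `f` has a run of `K`
consecutive zeros starting at an index `s ≥ 1` (with `s + K ≤ T - 1`), then the
signal `g` obtained from `f` by multiplying all entries with index `≥ s + K` by
`e^{iφ}` (for `φ ∈ (0, 2π)`) has the same `K`-band of its lifted matrix as `f`;
moreover, if some entry of `f` with index `≥ s + K` is nonzero then `g ≠ f`.
Hence such a signal is not uniquely determined by the `K`-band of `Z = f f†`. -/
theorem stmt1 (T K : ℕ) (hT : 1 ≤ T) (hK : 1 ≤ K) (hKT : K ≤ T - 1)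
    (s : ℕ) (hs : 1 ≤ s) (hsK : s + K ≤ T - 1)
    (f g : Fin T → ℂ)
    (hzero : ∀ i : Fin T, s ≤ (i : ℕ) → (i : ℕ) < s + K → f i = 0)
    (φ : ℝ) (hφ0 : 0 < φ) (hφ2 : φ < 2 * Real.pi)
    (hg : ∀ i : Fin T, g i =
      if (i : ℕ) < s + K then f i else Complex.exp (φ * Complex.I) * f i) :
    (∀ i j : Fin T, |(i : ℤ) - (j : ℤ)| ≤ (K : ℤ) →
      g i * (starRingEnd ℂ) (g j) = f i * (starRingEnd ℂ) (f j)) ∧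
    ((∃ i : Fin T, s + K ≤ (i : ℕ) ∧ f i ≠ 0) → g ≠ f) := by
  have hconj : (starRingEnd ℂ) (Complex.exp (φ * Complex.I)) *
      Complex.exp (φ * Complex.I) = 1 := by
    rw [← Complex.exp_conj]
    rw [← Complex.exp_add]
    simp [Complex.ext_iff]
  constructor
  · intro i j hij
    rw [hg i, hg j]
    by_cases hi : (i : ℕ) < s + K <;> by_cases hj : (j : ℕ) < s + K <;>
      simp only [hi, hj, if_true, if_false, if_pos, if_neg, map_mul]
    · -- i < s+K, j ≥ s+K : then i ≥ s
      have hi2 : s ≤ (i : ℕ) := by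
        rw [abs_sub_le_iff] at hij; omega
      rw [hzero i hi2 hi]; simp
    · have hj2 : s ≤ (j : ℕ) := by
        rw [abs_sub_le_iff] at hij; omega
      rw [hzero j hj2 hj]; simp
    · calc Complex.exp (φ * Complex.I) * f i *
            ((starRingEnd ℂ) (Complex.exp (φ * Complex.I)) * (starRingEnd ℂ) (f j))
          = ((starRingEnd ℂ) (Complex.exp (φ * Complex.I)) * Complex.exp (φ * Complex.I))
            * (f i * (starRingEnd ℂ) (f j)) := by ring
        _ = f i * (starRingEnd ℂ) (f j) := by rw [hconj]; ring
  · rintro ⟨i, hi, hfi⟩ heq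
    have := hg i
    rw [heq, if_neg (by omega)] at this
    have : Complex.exp (φ * Complex.I) = 1 :=
      mul_right_cancel₀ hfi (by rw [one_mul]; exact this.symm)
    exact exp_ne_one_aux φ hφ0 hφ2 this
end

section
/- Let T ≥ 1, K ∈ {1, …, T−1}, and let f ∈ ℂ^T lie in the signal class S_K (no run of K consecutive zero entries). Let Z = f f†. If X ∈ ℂ^{T×T} is positive semidefinite and X_{ij} = Z_{ij} = f_i · conj(f_j) for all indices with |i − j| ≤ K, then X = f f†. That is, Z is the unique positive semidefinite matrix agreeing with Z on its K-band; equivalently, Z is the unique minimizer of the noiseless PSD-constrained least-squares problem over the K-band measurements. -/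
open scoped ComplexOrder

/-- The signal class `S_K`: vectors of length `T` containing no run of `K`
consecutive zero entries. -/
def SignalClass (T K : ℕ) : Set (Fin T → ℂ) :=
  {f | ∀ s : ℕ, s + K ≤ T → ∃ j : Fin T, s ≤ (j : ℕ) ∧ (j : ℕ) < s + K ∧ f j ≠ 0}

open Matrix

lemma sum_two_aux {α} [Fintype α] [DecidableEq α] (m j : α) (hmj : m ≠ j) (A B : α → ℂ) :
    ∑ x, (if x = m then A x else if x = j then B x else 0) = A m + B j := by
  have h : ∀ x, (if x = m then A x else if x = j then B x else 0)
      = (if x = m then A x else 0) + (if x = j then B x else 0) := by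
    intro x
    by_cases h1 : x = m <;> by_cases h2 : x = j
    · exact absurd (h1 ▸ h2) hmj
    all_goals simp [h1, h2, hmj, Ne.symm hmj]
  simp_rw [h]
  rw [Finset.sum_add_distrib]
  simp

/-- Key propagation lemma: if a PSD matrix `X` agrees with `f f†` on the
entries `(m,m)`, `(j,j)`, `(m,j)`, `(j,m)`, then the corresponding
rank-one relation propagates along rows. -/
lemma key_aux (T : ℕ) (f : Fin T → ℂ) (X : Matrix (Fin T) (Fin T) ℂ)
    (hX : X.PosSemidef) (m j : Fin T) (hmj : m ≠ j)
    (hmm : X m m = f m * (starRingEnd ℂ) (f m))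
    (hjj : X j j = f j * (starRingEnd ℂ) (f j))
    (hmj1 : X m j = f m * (starRingEnd ℂ) (f j))
    (hmj2 : X j m = f j * (starRingEnd ℂ) (f m)) :
    ∀ k, X k m * (starRingEnd ℂ) (f j) = X k j * (starRingEnd ℂ) (f m) := by
  set v : Fin T → ℂ :=
    fun t => if t = m then (starRingEnd ℂ) (f j) else if t = j then -((starRingEnd ℂ) (f m)) else 0
    with hv_def
  have hv : ∀ k, (X *ᵥ v) k = X k m * (starRingEnd ℂ) (f j) + X k j * (-((starRingEnd ℂ) (f m))) := by
    intro k
    simp only [hv_def, Matrix.mulVec, dotProduct, mul_ite, mul_zero]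
    exact sum_two_aux m j hmj _ _
  have hdot : star v ⬝ᵥ (X *ᵥ v) = 0 := by
    have h2 : star v ⬝ᵥ (X *ᵥ v)
        = star ((starRingEnd ℂ) (f j)) * (X *ᵥ v) m
          + star (-((starRingEnd ℂ) (f m))) * (X *ᵥ v) j := by
      simp only [hv_def, dotProduct, Pi.star_apply, apply_ite (star : ℂ → ℂ), star_zero, ite_mul,
        zero_mul]
      exact sum_two_aux m j hmj _ _
    rw [h2, hv m, hv j, hmm, hjj, hmj1, hmj2]
    simp only [Complex.star_def, star_neg, Complex.conj_conj]
    ring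
  have hker : X *ᵥ v = 0 := (hX.dotProduct_mulVec_zero_iff v).mp hdot
  intro k
  have := congrFun hker k
  rw [hv k] at this
  simp only [Pi.zero_apply] at this
  linear_combination this

/-- **Uniqueness of the PSD completion of the `K`-band.**  If `f ∈ S_K` and `X`
is a positive semidefinite matrix agreeing with the lifted matrix `Z = f f†`
on the `K`-band (all entries with `|i − j| ≤ K`), then `X = f f†` everywhere.
Equivalently, `Z` is the unique minimizer of the noiseless PSD-constrained
least-squares problem over the `K`-band measurements. -/
theorem stmt3 (T K : ℕ) (hT : 1 ≤ T) (hK : 1 ≤ K) (hKT : K ≤ T - 1)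
    (f : Fin T → ℂ) (hfS : f ∈ SignalClass T K)
    (X : Matrix (Fin T) (Fin T) ℂ) (hX : X.PosSemidef)
    (hband : ∀ i j : Fin T, |(i : ℤ) - (j : ℤ)| ≤ (K : ℤ) →
      X i j = f i * (starRingEnd ℂ) (f j)) :
    ∀ i j : Fin T, X i j = f i * (starRingEnd ℂ) (f j) := by
  have main : ∀ d : ℕ, ∀ i j : Fin T, (j : ℕ) - (i : ℕ) = d → (i : ℕ) ≤ (j : ℕ) →
      X i j = f i * (starRingEnd ℂ) (f j) := by
    intro d
    induction d using Nat.strong_induction_on with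
    | _ d IH =>
      intro i j hd hij
      by_cases hdK : d ≤ K
      · exact hband i j (by rw [abs_le]; constructor <;> omega)
      · push_neg at hdK
        have hjlt : (j : ℕ) < T := j.isLt
        obtain ⟨m, hm1, hm2, hm0⟩ := hfS ((j : ℕ) - K) (by omega)
        have hmne : m ≠ j := Fin.ne_of_val_ne (by omega)
        have hkey := key_aux T f X hX m j hmne
          (hband m m (by simp))
          (hband j j (by simp))
          (hband m j (by rw [abs_le]; constructor <;> omega))
          (hband j m (by rw [abs_le]; constructor <;> omega))
        have hIH : X i m = f i * (starRingEnd ℂ) (f m) :=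
          IH ((m : ℕ) - (i : ℕ)) (by omega) i m rfl (by omega)
        have h1 := hkey i
        rw [hIH] at h1
        have hc : (starRingEnd ℂ) (f m) ≠ 0 := star_ne_zero.mpr hm0
        exact (mul_right_cancel₀ hc (by linear_combination h1)).symm
  intro i j
  rcases le_total (i : ℕ) (j : ℕ) with h | h
  · exact main ((j : ℕ) - (i : ℕ)) i j rfl h
  · have := main ((i : ℕ) - (j : ℕ)) j i rfl h
    have h2 := hX.1.apply i j
    rw [this] at h2
    rw [← h2]
    simp [Complex.star_def, mul_comm]
end

section
/- Let z₁, z₂ ∈ ℂ and ε > 0 satisfy ε < |z₁| ≤ 1, |z₂| ≤ 1, and |z₁ − z₂| = δ with δ < ε. Then z₂ ≠ 0 and the unit phasors of z₁ and z₂ satisfy | z₁/|z₁| − z₂/|z₂| | ≤ √(2 − 2·√(1 − δ²/ε²)). Equivalently, if θ denotes the angle between z₁ and z₂, then |e^{iθ} − 1| ≤ √(2 − 2·√(1 − δ²/ε²)). -/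
/-- **Phase-perturbation lemma.**  If `ε < |z₁| ≤ 1`, `|z₂| ≤ 1` and
`|z₁ − z₂| = δ < ε`, then `z₂ ≠ 0` and the unit phasors of `z₁` and `z₂` differ
by at most `√(2 − 2√(1 − δ²/ε²))`; equivalently, the angle `θ` between `z₁` and
`z₂` satisfies `|e^{iθ} − 1| ≤ √(2 − 2√(1 − δ²/ε²))`. -/
theorem stmt4 (z₁ z₂ : ℂ) (ε δ : ℝ) (hε : 0 < ε)
    (h1 : ε < ‖z₁‖) (h1' : ‖z₁‖ ≤ 1)
    (h2 : ‖z₂‖ ≤ 1)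
    (hδ : ‖z₁ - z₂‖ = δ) (hδε : δ < ε) :
    z₂ ≠ 0 ∧
    ‖z₁ / ((‖z₁‖ : ℝ) : ℂ) - z₂ / ((‖z₂‖ : ℝ) : ℂ)‖ ≤
      Real.sqrt (2 - 2 * Real.sqrt (1 - δ ^ 2 / ε ^ 2)) := by
  set r₁ := ‖z₁‖ with hr₁
  set r₂ := ‖z₂‖ with hr₂
  have hδ0 : 0 ≤ δ := hδ ▸ norm_nonneg _
  have hr₁pos : 0 < r₁ := lt_trans hε h1
  have hr₂pos : 0 < r₂ := by
    have h := norm_sub_norm_le z₁ z₂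
    simp only [← hr₁, ← hr₂, hδ] at h
    linarith
  have hz₂ : z₂ ≠ 0 := fun h => by simp [hr₂, h] at hr₂pos
  refine ⟨hz₂, ?_⟩
  set A := (z₁ * (starRingEnd ℂ) z₂).re with hA
  set B := (z₁ * (starRingEnd ℂ) z₂).im with hB
  -- A² + B² = (r₁ r₂)²
  have hAB : A ^ 2 + B ^ 2 = (r₁ * r₂) ^ 2 := by
    have : (r₁ * r₂) ^ 2 = Complex.normSq (z₁ * (starRingEnd ℂ) z₂) := by
      rw [← Complex.sq_norm, norm_mul, Complex.norm_conj]
    rw [this, Complex.normSq_apply]; ring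
  -- |B| ≤ δ r₂
  have hBle : |B| ≤ δ * r₂ := by
    have heq : B = ((z₁ - z₂) * (starRingEnd ℂ) z₂).im := by
      rw [hB, sub_mul]
      have : (z₂ * (starRingEnd ℂ) z₂).im = 0 := by
        rw [Complex.mul_conj]; simp
      simp [Complex.sub_im, this]
    rw [heq]
    calc |((z₁ - z₂) * (starRingEnd ℂ) z₂).im| ≤ ‖(z₁ - z₂) * (starRingEnd ℂ) z₂‖ :=
          Complex.abs_im_le_norm _
      _ = δ * r₂ := by rw [norm_mul, Complex.norm_conj, hδ]
  -- δ² = r₁² + r₂² − 2A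
  have hδsq : δ ^ 2 = r₁ ^ 2 + r₂ ^ 2 - 2 * A := by
    rw [← hδ, Complex.sq_norm, Complex.normSq_sub, hr₁, hr₂, Complex.sq_norm, Complex.sq_norm]
  -- A ≥ 0
  have hApos : 0 ≤ A := by
    nlinarith [sq_nonneg (r₁ - r₂)]
  -- A² ≥ (r₁ r₂)² (1 − δ²/ε²)
  have hkey : (r₁ * r₂) ^ 2 * (1 - δ ^ 2 / ε ^ 2) ≤ A ^ 2 := by
    have hB2 : B ^ 2 ≤ δ ^ 2 * r₂ ^ 2 := by
      nlinarith [abs_nonneg B, sq_abs B]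
    have h1ε : δ ^ 2 / ε ^ 2 * r₁ ^ 2 ≥ δ ^ 2 := by
      rw [ge_iff_le, div_mul_eq_mul_div, le_div_iff₀ (by positivity)]
      have hεr : ε ^ 2 ≤ r₁ ^ 2 := by nlinarith
      nlinarith [mul_le_mul_of_nonneg_left hεr (sq_nonneg δ)]
    nlinarith [sq_nonneg r₂, hε.le]
  -- √(1 − δ²/ε²) ≤ A/(r₁ r₂)
  have hc : Real.sqrt (1 - δ ^ 2 / ε ^ 2) ≤ A / (r₁ * r₂) := by
    have hcnn : 0 ≤ A / (r₁ * r₂) := by positivity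
    have : Real.sqrt (1 - δ ^ 2 / ε ^ 2) ≤ Real.sqrt ((A / (r₁ * r₂)) ^ 2) := by
      apply Real.sqrt_le_sqrt
      rw [div_pow, le_div_iff₀ (by positivity)]
      linarith [hkey]
    rwa [Real.sqrt_sq hcnn] at this
  -- the squared phasor distance equals 2 − 2A/(r₁r₂)
  have hdist : (‖z₁ / (r₁ : ℂ) - z₂ / (r₂ : ℂ)‖) ^ 2 = 2 - 2 * (A / (r₁ * r₂)) := by
    rw [Complex.sq_norm, Complex.normSq_sub]
    have e1 : Complex.normSq (z₁ / (r₁ : ℂ)) = 1 := by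
      rw [Complex.normSq_div]
      simp only [Complex.normSq_ofReal]
      rw [← Complex.sq_norm, ← hr₁]
      field_simp
    have e2 : Complex.normSq (z₂ / (r₂ : ℂ)) = 1 := by
      rw [Complex.normSq_div]
      simp only [Complex.normSq_ofReal]
      rw [← Complex.sq_norm, ← hr₂]
      field_simp
    have e3 : (z₁ / (r₁ : ℂ) * (starRingEnd ℂ) (z₂ / (r₂ : ℂ))).re = A / (r₁ * r₂) := by
      rw [map_div₀, Complex.conj_ofReal, div_mul_div_comm, ← Complex.ofReal_mul,
        Complex.div_re]
      simp only [Complex.ofReal_re, Complex.ofReal_im, Complex.normSq_ofReal]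
      rw [← hA]
      have him : (z₁ * (starRingEnd ℂ) z₂).im = B := rfl
      rw [him]
      field_simp
      ring
    rw [e1, e2, e3]
    ring
  -- conclude
  have hfinal : (‖z₁ / (r₁ : ℂ) - z₂ / (r₂ : ℂ)‖) ^ 2 ≤
      2 - 2 * Real.sqrt (1 - δ ^ 2 / ε ^ 2) := by
    rw [hdist]; linarith
  calc ‖z₁ / (r₁ : ℂ) - z₂ / (r₂ : ℂ)‖
      = Real.sqrt ((‖z₁ / (r₁ : ℂ) - z₂ / (r₂ : ℂ)‖) ^ 2) :=
        (Real.sqrt_sq (norm_nonneg _)).symm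
    _ ≤ Real.sqrt (2 - 2 * Real.sqrt (1 - δ ^ 2 / ε ^ 2)) := Real.sqrt_le_sqrt hfinal
end

section
/- Let X ∈ ℂ^{n×n} be positive semidefinite and fix indices i ≠ j. Suppose the 2×2 principal submatrix of X on {i, j} is singular, i.e. X_{ii}·X_{jj} = |X_{ij}|². Then, whenever X_{ii} > 0, the j-th column of X is a scalar multiple of the i-th column of X; explicitly, col_j(X) = (X_{ij}/X_{ii})·col_i(X). -/
open scoped ComplexOrder
open Matrix

/-- **Singular 2×2 principal PSD submatrix implies column dependence.**
Let `X` be positive semidefinite with `X_{ii}·X_{jj} = |X_{ij}|²` for some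
`i ≠ j`.  Then, whenever `X_{ii} > 0`, the `j`-th column of `X` is the scalar
multiple `(X_{ij}/X_{ii})` of the `i`-th column: `X k j = (X i j / X i i) · X k i`
for all `k`. -/
theorem stmt7 (n : ℕ) (X : Matrix (Fin n) (Fin n) ℂ) (hX : X.PosSemidef)
    (i j : Fin n) (hij : i ≠ j)
    (hsing : X i i * X j j = (((‖X i j‖ : ℝ) : ℂ)) ^ 2)
    (hpos : 0 < (X i i).re) :
    ∀ k, X k j = X i j / X i i * X k i := by
  have hherm := hX.isHermitian
  have hii_re : (X i i : ℂ) = ((X i i).re : ℂ) := (hherm.coe_re_apply_self i).symm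
  have hii_ne : X i i ≠ 0 := by
    intro h
    rw [h] at hpos
    simp at hpos
  have hji : X j i = starRingEnd ℂ (X i j) := by
    have := congrFun (congrFun hherm j) i
    simpa [Matrix.conjTranspose_apply] using this.symm
  set α : ℂ := X i j / X i i with hα
  set v : Fin n → ℂ := Pi.single j 1 + Pi.single i (-α) with hv
  have habs : (((‖X i j‖ : ℝ) : ℂ)) ^ 2 = X i j * starRingEnd ℂ (X i j) := by
    rw [Complex.mul_conj]
    norm_cast
    exact (Complex.normSq_eq_norm_sq _).symm
  have hXv : ∀ k, (X *ᵥ v) k = X k j - α * X k i := by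
    intro k
    simp [hv, Matrix.mulVec_add, mul_comm, sub_eq_add_neg]
  have hstar_ii : starRingEnd ℂ (X i i) = X i i := by
    rw [hii_re]; simp
  have key : star v ⬝ᵥ (X *ᵥ v) = 0 := by
    have hsv : star v = Pi.single j 1 + Pi.single i (-(starRingEnd ℂ α)) := by
      funext l
      rcases eq_or_ne l j with rfl | hlj
      · simp [hv, Pi.single_eq_of_ne hij.symm]
      rcases eq_or_ne l i with rfl | hli
      · simp [hv, Pi.single_eq_of_ne hij]
      · simp [hv, Pi.single_eq_of_ne hlj, Pi.single_eq_of_ne hli]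
    rw [hsv, add_dotProduct, single_dotProduct, single_dotProduct,
      hXv j, hXv i]
    have h1 : α * X j i = X j j := by
      rw [hα, hji, div_mul_eq_mul_div, ← habs, ← hsing, mul_comm,
        mul_div_assoc, div_self hii_ne, mul_one]
    have h2 : starRingEnd ℂ α * X i j = X j j := by
      rw [hα, map_div₀, hstar_ii, div_mul_eq_mul_div, mul_comm, ← habs, ← hsing, mul_comm,
        mul_div_assoc, div_self hii_ne, mul_one]
    have h3 : α * X i i = X i j := by
      rw [hα, div_mul_cancel₀ _ hii_ne]
    rw [h1, h3]
    ring
  have hz : X *ᵥ v = 0 := (hX.dotProduct_mulVec_zero_iff v).mp key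
  intro k
  have := congrFun hz k
  rw [hXv k] at this
  simpa [sub_eq_zero] using this
end

section
/- Let T ≥ 2 and let f ∈ ℂ^T with f_0 = 1, f_i = r_i e^{iθ_i} where 0 < r_i ≤ 1 for all i, and set γ = min_i r_i². Let 0 < ε' < ε < γ. Suppose real numbers Ẑ_{ii} (1 ≤ i ≤ T−1) satisfy |Ẑ_{ii} − r_i²| ≤ ε, and complex numbers Ẑ_{i,i+1} (0 ≤ i ≤ T−2) satisfy |Ẑ_{i,i+1} − f_i·conj(f_{i+1})| ≤ ε'. Define the estimate f̂ ∈ ℂ^T recursively by f̂_0 = 1 and, for i ≥ 1, f̂_i = √(|Ẑ_{ii}|)·e^{iθ̂_i} with θ̂_i = θ̂_{i−1} − arg(Ẑ_{i−1,i}) and θ̂_0 = 0 (note Ẑ_{i−1,i} ≠ 0 since |f_{i−1} conj(f_i)| ≥ γ > ε'). Then ‖f̂ − f‖₂² ≤ (2Tε²)/γ + ((2T³ − 3T² + T)/3)·(2 − 2·√(1 − ε'²/ε²)). -/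
lemma aux_sum_sq (n : ℕ) : ∑ i ∈ Finset.range n, (i:ℝ)^2
    = (2*(n:ℝ)^3 - 3*(n:ℝ)^2 + n)/6 := by
  induction n with
  | zero => simp
  | succ n ih => rw [Finset.sum_range_succ, ih]; push_cast; ring

set_option maxHeartbeats 2000000 in
lemma aux_abs_pos (z w : ℂ) (a : ℝ) (h : ‖z - w‖ ≤ a)
    (hw : a < ‖w‖) : 0 < ‖z‖ := by
  have h1 := norm_sub_le_norm_sub_add_norm_sub w z 0
  simp only [sub_zero] at h1
  rw [norm_sub_rev w z] at h1
  linarith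

set_option maxHeartbeats 2000000 in
lemma aux_phase (ε ε' : ℝ) (hε'0 : 0 < ε') (hε'ε : ε' < ε) (z w : ℂ)
    (hzw : ‖z - w‖ ≤ ε') (hw : ε < ‖w‖) :
    ‖z / (‖z‖ : ℂ) - w / (‖w‖ : ℂ)‖ ^ 2
      ≤ 2 - 2 * Real.sqrt (1 - ε' ^ 2 / ε ^ 2) := by
  have hε0 : 0 < ε := hε'0.trans hε'ε
  have hB : 0 < ‖w‖ := hε0.trans hw
  have hA : 0 < ‖z‖ := aux_abs_pos z w ε' hzw (hε'ε.trans hw)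
  set A := ‖z‖ with hAdef
  set B := ‖w‖ with hBdef
  set R := (z * (starRingEnd ℂ) w).re with hRdef
  set M := (z * (starRingEnd ℂ) w).im with hMdef
  have hnormSq : R^2 + M^2 = A^2 * B^2 := by
    have h1 : Complex.normSq (z * (starRingEnd ℂ) w)
        = Complex.normSq z * Complex.normSq w := by
      rw [Complex.normSq_mul, Complex.normSq_conj]
    rw [Complex.normSq_apply] at h1
    rw [← Complex.sq_norm, ← Complex.sq_norm] at h1
    nlinarith [h1]
  have hM : |M| ≤ ε' * A := by
    have key : (z * (starRingEnd ℂ) w).im = (z * (starRingEnd ℂ) (w - z)).im := by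
      rw [map_sub, mul_sub, Complex.sub_im, Complex.mul_conj]
      simp
    calc |M| = |(z * (starRingEnd ℂ) (w - z)).im| := by rw [hMdef, key]
      _ ≤ ‖z * (starRingEnd ℂ) (w - z)‖ := Complex.abs_im_le_norm _
      _ = A * ‖w - z‖ := by rw [norm_mul, Complex.norm_conj]
      _ ≤ ε' * A := by
          rw [norm_sub_rev w z]
          rw [mul_comm]
          exact mul_le_mul_of_nonneg_right hzw hA.le
  have hR0 : 0 ≤ R := by
    have h1 : R = ((z - w) * (starRingEnd ℂ) w).re + B^2 := by
      have hww : (w * (starRingEnd ℂ) w).re = B^2 := by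
        rw [Complex.mul_conj, Complex.ofReal_re, Complex.normSq_eq_norm_sq]
      rw [hRdef, sub_mul, Complex.sub_re, hww]; ring
    have h2 : |((z - w) * (starRingEnd ℂ) w).re| ≤ ε' * B := by
      calc |((z - w) * (starRingEnd ℂ) w).re| ≤ ‖(z - w) * (starRingEnd ℂ) w‖ :=
            Complex.abs_re_le_norm _
        _ = ‖z - w‖ * B := by rw [norm_mul, Complex.norm_conj]
        _ ≤ ε' * B := mul_le_mul_of_nonneg_right hzw hB.le
    rw [abs_le] at h2
    nlinarith
  have hδ : 0 ≤ 1 - ε'^2/ε^2 := by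
    rw [sub_nonneg, div_le_one (by positivity)]
    nlinarith
  set c := Real.sqrt (1 - ε'^2/ε^2) with hcdef
  have hc0 : 0 ≤ c := Real.sqrt_nonneg _
  have hc2 : c^2 = 1 - ε'^2/ε^2 := Real.sq_sqrt hδ
  have hkey : c * (A * B) ≤ R := by
    have hM2 : M^2 ≤ ε'^2 * A^2 := by nlinarith [abs_nonneg M, sq_abs M]
    have hεB : ε^2 ≤ B^2 := by nlinarith
    have hM3 : M^2 ≤ ε'^2/ε^2 * (A^2 * B^2) := by
      rw [div_mul_eq_mul_div, le_div_iff₀ (by positivity)]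
      nlinarith [sq_nonneg A, sq_nonneg M]
    have hsq : (c * (A * B))^2 ≤ R^2 := by
      have h4 : (c * (A * B))^2 = A^2*B^2 - ε'^2/ε^2 * (A^2*B^2) := by
        rw [mul_pow, hc2]; ring
      rw [h4]; linarith
    nlinarith [hsq, hR0, mul_nonneg hc0 (mul_nonneg hA.le hB.le)]
  have hfin : ‖z / (A : ℂ) - w / (B : ℂ)‖ ^ 2 = 2 - 2 * (R / (A * B)) := by
    rw [Complex.sq_norm, Complex.normSq_sub]
    have e1 : Complex.normSq (z / (A : ℂ)) = 1 := by
      rw [Complex.normSq_div, Complex.normSq_ofReal, ← Complex.sq_norm, ← hAdef, sq]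
      exact div_self (by positivity)
    have e2 : Complex.normSq (w / (B : ℂ)) = 1 := by
      rw [Complex.normSq_div, Complex.normSq_ofReal, ← Complex.sq_norm, ← hBdef, sq]
      exact div_self (by positivity)
    have e3 : (z / (A : ℂ) * (starRingEnd ℂ) (w / (B : ℂ))).re = R / (A * B) := by
      rw [map_div₀, Complex.conj_ofReal, div_mul_div_comm, ← Complex.ofReal_mul,
        Complex.div_ofReal_re]
    rw [e1, e2, e3]; ring
  rw [hfin]
  have : c ≤ R / (A * B) := by
    rw [le_div_iff₀ (by positivity)]
    linarith
  linarith



set_option maxHeartbeats 2000000 in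
/-- **Stability of the bandwidth-one block-by-block algebraic estimator
(deterministic reconstruction error bound).**  Let `f ∈ ℂ^T` have entries
`f_i = r_i e^{iθ_i}` with `0 < r_i ≤ 1`, `f_0 = 1`, and `γ = min_i r_i²`.
Suppose the diagonal data `Ẑ_{ii}` have error at most `ε` and the first
off-diagonal data `Ẑ_{i,i+1}` have error at most `ε'`, with `0 < ε' < ε < γ`.
Then the recursive estimate `f̂` (magnitudes `√|Ẑ_{ii}|`, phases propagated by
`θ̂_i = θ̂_{i−1} − arg Ẑ_{i−1,i}`) satisfies
`‖f̂ − f‖₂² ≤ 2Tε²/γ + ((2T³ − 3T² + T)/3)·(2 − 2√(1 − ε'²/ε²))`. -/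
theorem stmt8 (T : ℕ) (hT : 2 ≤ T)
    (f : ℕ → ℂ) (r θ : ℕ → ℝ)
    (hf : ∀ i < T, f i = (r i : ℂ) * Complex.exp ((θ i : ℂ) * Complex.I))
    (hf0 : f 0 = 1)
    (hr : ∀ i < T, 0 < r i ∧ r i ≤ 1)
    (γ : ℝ)
    (hγ : γ = (Finset.range T).inf'
      (Finset.nonempty_range_iff.mpr (by omega)) (fun i => r i ^ 2))
    (ε ε' : ℝ) (hε'0 : 0 < ε') (hε'ε : ε' < ε) (hεγ : ε < γ)
    (Zd : ℕ → ℝ) (Zo : ℕ → ℂ)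
    (hZd : ∀ i, 1 ≤ i → i < T → |Zd i - r i ^ 2| ≤ ε)
    (hZo : ∀ i, i + 1 < T →
      ‖Zo i - f i * (starRingEnd ℂ) (f (i + 1))‖ ≤ ε')
    (θhat : ℕ → ℝ) (hθ0 : θhat 0 = 0)
    (hθ : ∀ i, 1 ≤ i → i < T → θhat i = θhat (i - 1) - Complex.arg (Zo (i - 1)))
    (fhat : ℕ → ℂ) (hfhat0 : fhat 0 = 1)
    (hfhat : ∀ i, 1 ≤ i → i < T →
      fhat i = (Real.sqrt |Zd i| : ℂ) * Complex.exp ((θhat i : ℂ) * Complex.I)) :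
    ∑ i ∈ Finset.range T, ‖fhat i - f i‖ ^ 2 ≤
      2 * (T : ℝ) * ε ^ 2 / γ +
      (2 * (T : ℝ) ^ 3 - 3 * (T : ℝ) ^ 2 + (T : ℝ)) / 3 *
        (2 - 2 * Real.sqrt (1 - ε' ^ 2 / ε ^ 2)) := by
  have hT0 : 0 < T := by omega
  have hγle : ∀ i, i < T → γ ≤ r i ^ 2 := by
    intro i hi
    rw [hγ]
    exact Finset.inf'_le _ (Finset.mem_range.mpr hi)
  have hγpos : 0 < γ := by
    rw [hγ, Finset.lt_inf'_iff]
    intro i hi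
    exact pow_pos (hr i (Finset.mem_range.mp hi)).1 2
  have hε0 : 0 < ε := hε'0.trans hε'ε
  set c := Real.sqrt (1 - ε' ^ 2 / ε ^ 2) with hcdef
  have hc0 : 0 ≤ c := Real.sqrt_nonneg _
  have hc1 : c ≤ 1 := by
    have h1 : 0 ≤ ε'^2/ε^2 := by positivity
    calc c ≤ Real.sqrt 1 := Real.sqrt_le_sqrt (by linarith)
      _ = 1 := Real.sqrt_one
  have hD0 : 0 ≤ 2 - 2*c := by linarith
  -- exp facts
  have hEconj : ∀ a : ℝ, (starRingEnd ℂ) (Complex.exp ((a:ℂ)*Complex.I))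
      = Complex.exp (((-a : ℝ):ℂ)*Complex.I) := by
    intro a
    rw [← Complex.exp_conj]
    congr 1
    rw [map_mul, Complex.conj_ofReal, Complex.conj_I]
    push_cast
    ring
  have hEmul : ∀ a b : ℝ, Complex.exp ((a:ℂ)*Complex.I) * Complex.exp ((b:ℂ)*Complex.I)
      = Complex.exp (((a+b : ℝ):ℂ)*Complex.I) := by
    intro a b
    rw [← Complex.exp_add]
    congr 1
    push_cast
    ring
  have hEunit : ∀ a : ℝ, Complex.exp ((a:ℂ)*Complex.I)
      * (starRingEnd ℂ) (Complex.exp ((a:ℂ)*Complex.I)) = 1 := by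
    intro a
    rw [hEconj, hEmul]
    simp
  -- θ 0
  have hrθ0 : Complex.exp ((θ 0 : ℂ) * Complex.I) = 1 := by
    have h0 := hf 0 hT0
    rw [hf0] at h0
    have hr0pos := (hr 0 hT0).1
    have habs : (1:ℝ) = r 0 := by
      have h1 := congrArg (‖·‖) h0
      rwa [norm_one, norm_mul, Complex.norm_real, Real.norm_eq_abs, Complex.norm_exp_ofReal_mul_I, mul_one,
        abs_of_pos hr0pos] at h1
    rw [← habs] at h0
    simp only [Complex.ofReal_one, one_mul] at h0
    exact h0.symm
  -- phase accumulation
  have hu : ∀ i, i < T → ‖Complex.exp ((θhat i : ℂ) * Complex.I)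
        * (starRingEnd ℂ) (Complex.exp ((θ i : ℂ) * Complex.I)) - 1‖
      ≤ (i : ℝ) * Real.sqrt (2 - 2*c) := by
    intro i
    induction i with
    | zero =>
      intro _
      rw [hθ0, hrθ0]
      simp
    | succ n ih =>
      intro hn1
      have hnT : n < T := by omega
      have hfn := hf n hnT
      have hfn1 := hf (n+1) hn1
      have hrn := hr n hnT
      have hrn1 := hr (n+1) hn1
      set z := Zo n with hzdef
      set w := f n * (starRingEnd ℂ) (f (n+1)) with hwdef
      have habsw : ‖w‖ = r n * r (n+1) := by
        rw [hwdef, hfn, hfn1, norm_mul, Complex.norm_conj, norm_mul, norm_mul,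
          Complex.norm_real, Real.norm_eq_abs, Complex.norm_real, Real.norm_eq_abs, Complex.norm_exp_ofReal_mul_I,
          Complex.norm_exp_ofReal_mul_I, abs_of_pos hrn.1, abs_of_pos hrn1.1]
        ring
      have hεw : ε < ‖w‖ := by
        rw [habsw]
        have g1 := hγle n hnT
        have g2 := hγle (n+1) hn1
        nlinarith [hrn.1, hrn1.1, hγpos]
      have hzw : ‖z - w‖ ≤ ε' := hZo n hn1
      have hAz : 0 < ‖z‖ := aux_abs_pos z w ε' hzw (hε'ε.trans hεw)
      have hstep' : ‖z / (‖z‖ : ℂ) - w / (‖w‖ : ℂ)‖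
          ≤ Real.sqrt (2 - 2*c) := by
        rw [← Real.sqrt_sq (norm_nonneg (z / (‖z‖ : ℂ) - w / (‖w‖ : ℂ)))]
        exact Real.sqrt_le_sqrt (aux_phase ε ε' hε'0 hε'ε z w hzw hεw)
      have hdivz : z / (‖z‖ : ℂ) = Complex.exp ((Complex.arg z : ℂ) * Complex.I) := by
        rw [div_eq_iff (Complex.ofReal_ne_zero.mpr hAz.ne'), mul_comm]
        exact (Complex.norm_mul_exp_arg_mul_I z).symm
      have hne1 : (r n : ℂ) ≠ 0 := Complex.ofReal_ne_zero.mpr hrn.1.ne'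
      have hne2 : (r (n+1) : ℂ) ≠ 0 := Complex.ofReal_ne_zero.mpr hrn1.1.ne'
      have hdivw : w / (‖w‖ : ℂ) = Complex.exp ((θ n : ℂ) * Complex.I)
          * (starRingEnd ℂ) (Complex.exp ((θ (n+1) : ℂ) * Complex.I)) := by
        rw [habsw, hwdef, hfn, hfn1, map_mul, Complex.conj_ofReal]
        push_cast
        field_simp
      have hθh : θhat (n+1) = θhat n - Complex.arg z := by
        have h := hθ (n+1) (by omega) hn1
        simpa using h
      have hdiff : Complex.exp ((θhat (n+1) : ℂ) * Complex.I)
            * (starRingEnd ℂ) (Complex.exp ((θ (n+1) : ℂ) * Complex.I))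
          - Complex.exp ((θhat n : ℂ) * Complex.I)
            * (starRingEnd ℂ) (Complex.exp ((θ n : ℂ) * Complex.I))
          = Complex.exp ((θhat n : ℂ) * Complex.I)
            * (starRingEnd ℂ) (Complex.exp ((θ (n+1) : ℂ) * Complex.I))
            * ((starRingEnd ℂ) (z / (‖z‖ : ℂ))
              - (starRingEnd ℂ) (w / (‖w‖ : ℂ))) := by
        have e1 : Complex.exp ((θhat (n+1) : ℂ) * Complex.I)
            = Complex.exp ((θhat n : ℂ) * Complex.I)
              * (starRingEnd ℂ) (z / (‖z‖ : ℂ)) := by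
          have hsum' : θhat n + -(Complex.arg z) = θhat (n+1) := by rw [hθh]; ring
          rw [hdivz, hEconj, hEmul, hsum']
        have e2 : (starRingEnd ℂ) (Complex.exp ((θ n : ℂ) * Complex.I))
            = (starRingEnd ℂ) (Complex.exp ((θ (n+1) : ℂ) * Complex.I))
              * (starRingEnd ℂ) (w / (‖w‖ : ℂ)) := by
          rw [← map_mul]
          congr 1
          rw [hdivw, mul_left_comm, hEunit, mul_one]
        rw [e1, e2]
        ring
      have hstepabs : ‖Complex.exp ((θhat (n+1) : ℂ) * Complex.I)
            * (starRingEnd ℂ) (Complex.exp ((θ (n+1) : ℂ) * Complex.I))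
          - Complex.exp ((θhat n : ℂ) * Complex.I)
            * (starRingEnd ℂ) (Complex.exp ((θ n : ℂ) * Complex.I))‖
          ≤ Real.sqrt (2 - 2*c) := by
        rw [hdiff]
        simp only [map_mul, norm_mul, ← map_sub, Complex.norm_conj, Complex.norm_exp_ofReal_mul_I, one_mul]
        exact hstep'
      calc ‖Complex.exp ((θhat (n+1) : ℂ) * Complex.I)
            * (starRingEnd ℂ) (Complex.exp ((θ (n+1) : ℂ) * Complex.I)) - 1‖
          ≤ ‖Complex.exp ((θhat (n+1) : ℂ) * Complex.I)
              * (starRingEnd ℂ) (Complex.exp ((θ (n+1) : ℂ) * Complex.I))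
            - Complex.exp ((θhat n : ℂ) * Complex.I)
              * (starRingEnd ℂ) (Complex.exp ((θ n : ℂ) * Complex.I))‖
            + ‖Complex.exp ((θhat n : ℂ) * Complex.I)
              * (starRingEnd ℂ) (Complex.exp ((θ n : ℂ) * Complex.I)) - 1‖ :=
            norm_sub_le_norm_sub_add_norm_sub _ _ 1
        _ ≤ Real.sqrt (2 - 2*c) + (n : ℝ) * Real.sqrt (2 - 2*c) :=
            add_le_add hstepabs (ih hnT)
        _ = ((n+1 : ℕ) : ℝ) * Real.sqrt (2 - 2*c) := by push_cast; ring
  -- magnitude bound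
  have hmag : ∀ i, 1 ≤ i → i < T → (Real.sqrt |Zd i| - r i)^2 ≤ ε^2/γ := by
    intro i h1 h2
    obtain ⟨hri, hri1⟩ := hr i h2
    have hg : γ ≤ r i ^ 2 := hγle i h2
    have hzd := hZd i h1 h2
    rw [abs_le] at hzd
    have hZpos : 0 < Zd i := by linarith
    rw [abs_of_pos hZpos]
    set s := Real.sqrt (Zd i) with hsdef
    have hs0 : 0 ≤ s := Real.sqrt_nonneg _
    have hs2 : s^2 = Zd i := Real.sq_sqrt hZpos.le
    have key : (s - r i) * (s + r i) = Zd i - r i ^ 2 := by nlinarith [hs2]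
    have h6 : γ ≤ (s + r i)^2 := by nlinarith
    have h7 : (s - r i)^2 * γ ≤ (s - r i)^2 * (s + r i)^2 :=
      mul_le_mul_of_nonneg_left h6 (sq_nonneg _)
    have h8 : (s - r i)^2 * (s + r i)^2 = (Zd i - r i ^ 2)^2 := by
      rw [← mul_pow, key]
    have h9 : (Zd i - r i ^ 2)^2 ≤ ε^2 := by nlinarith
    rw [le_div_iff₀ hγpos]
    linarith
  -- per-term bound
  have hterm : ∀ i, i < T → ‖fhat i - f i‖^2
      ≤ 2*(ε^2/γ) + 2*(i:ℝ)^2*(2 - 2*c) := by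
    intro i hi
    rcases Nat.eq_zero_or_pos i with hi0 | hipos
    · subst hi0
      rw [hfhat0, hf0]
      simp
      positivity
    · have h1 : 1 ≤ i := hipos
      obtain ⟨hri, hri1⟩ := hr i hi
      have hsplit : fhat i - f i
          = ((Real.sqrt |Zd i| - r i : ℝ) : ℂ) * Complex.exp ((θhat i : ℂ) * Complex.I)
            + (r i : ℂ) * (Complex.exp ((θhat i : ℂ) * Complex.I)
              - Complex.exp ((θ i : ℂ) * Complex.I)) := by
        rw [hfhat i h1 hi, hf i hi]
        push_cast
        ring
      have hEd : ‖Complex.exp ((θhat i : ℂ) * Complex.I)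
          - Complex.exp ((θ i : ℂ) * Complex.I)‖ ≤ (i:ℝ) * Real.sqrt (2 - 2*c) := by
        have hid : (Complex.exp ((θhat i : ℂ) * Complex.I)
              - Complex.exp ((θ i : ℂ) * Complex.I))
              * (starRingEnd ℂ) (Complex.exp ((θ i : ℂ) * Complex.I))
            = Complex.exp ((θhat i : ℂ) * Complex.I)
              * (starRingEnd ℂ) (Complex.exp ((θ i : ℂ) * Complex.I)) - 1 := by
          rw [sub_mul, hEunit (θ i)]
        calc ‖Complex.exp ((θhat i : ℂ) * Complex.I)
              - Complex.exp ((θ i : ℂ) * Complex.I)‖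
            = ‖(Complex.exp ((θhat i : ℂ) * Complex.I)
                - Complex.exp ((θ i : ℂ) * Complex.I))
                * (starRingEnd ℂ) (Complex.exp ((θ i : ℂ) * Complex.I))‖ := by
              rw [norm_mul, Complex.norm_conj, Complex.norm_exp_ofReal_mul_I, mul_one]
          _ = ‖Complex.exp ((θhat i : ℂ) * Complex.I)
                * (starRingEnd ℂ) (Complex.exp ((θ i : ℂ) * Complex.I)) - 1‖ := by
              rw [hid]
          _ ≤ (i:ℝ) * Real.sqrt (2 - 2*c) := hu i hi
      have htri : ‖fhat i - f i‖
          ≤ |Real.sqrt |Zd i| - r i| + (i:ℝ) * Real.sqrt (2 - 2*c) := by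
        rw [hsplit]
        refine le_trans (norm_add_le _ _) ?_
        rw [norm_mul, norm_mul, Complex.norm_real, Real.norm_eq_abs, Complex.norm_exp_ofReal_mul_I, mul_one,
          Complex.norm_real, Real.norm_eq_abs, abs_of_pos hri]
        have hb : r i * ‖Complex.exp ((θhat i : ℂ) * Complex.I)
            - Complex.exp ((θ i : ℂ) * Complex.I)‖ ≤ (i:ℝ) * Real.sqrt (2 - 2*c) := by
          have hnn := norm_nonneg (Complex.exp ((θhat i : ℂ) * Complex.I)
            - Complex.exp ((θ i : ℂ) * Complex.I))
          nlinarith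
        linarith
      have ha2 : |Real.sqrt |Zd i| - r i|^2 ≤ ε^2/γ := by
        rw [sq_abs]
        exact hmag i h1 hi
      have hsqD : ((i:ℝ) * Real.sqrt (2 - 2*c))^2 = (i:ℝ)^2 * (2 - 2*c) := by
        rw [mul_pow, Real.sq_sqrt hD0]
      have habs0 := norm_nonneg (fhat i - f i)
      have ha0 : 0 ≤ |Real.sqrt |Zd i| - r i| := abs_nonneg _
      have hb0 : 0 ≤ (i:ℝ) * Real.sqrt (2 - 2*c) := by positivity
      nlinarith [htri, ha2, hsqD, habs0, ha0, hb0,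
        sq_nonneg (|Real.sqrt |Zd i| - r i| - (i:ℝ) * Real.sqrt (2 - 2*c))]
  -- sum up
  have hsum : ∑ i ∈ Finset.range T, ‖fhat i - f i‖^2
      ≤ ∑ i ∈ Finset.range T, (2*(ε^2/γ) + 2*(i:ℝ)^2*(2 - 2*c)) :=
    Finset.sum_le_sum (fun i hi => hterm i (Finset.mem_range.mp hi))
  have heq : ∑ i ∈ Finset.range T, (2*(ε^2/γ) + 2*(i:ℝ)^2*(2 - 2*c))
      = 2 * (T:ℝ) * ε^2 / γ
        + (2*(T:ℝ)^3 - 3*(T:ℝ)^2 + (T:ℝ))/3 * (2 - 2*c) := by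
    rw [Finset.sum_add_distrib, Finset.sum_const, Finset.card_range, nsmul_eq_mul]
    have h2 : ∑ i ∈ Finset.range T, 2*(i:ℝ)^2*(2 - 2*c)
        = (∑ i ∈ Finset.range T, (i:ℝ)^2) * (2*(2 - 2*c)) := by
      rw [Finset.sum_mul]
      exact Finset.sum_congr rfl (fun i _ => by ring)
    rw [h2, aux_sum_sq]
    field_simp
    ring
  calc ∑ i ∈ Finset.range T, ‖fhat i - f i‖^2
      ≤ ∑ i ∈ Finset.range T, (2*(ε^2/γ) + 2*(i:ℝ)^2*(2 - 2*c)) := hsum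
    _ = _ := heq
end

section
/- Let A be an ℝ-linear map from the real vector space of Hermitian T×T complex matrices to ℝ^m, let Z be a positive semidefinite T×T matrix, let ε ∈ ℝ^m, and set b = A(Z) + ε. Let X* be any positive semidefinite matrix minimizing L(X) = ‖A(X) − b‖₂² over the cone of positive semidefinite matrices. Define the descent cone D(L,Z) = {Δ Hermitian : ∃ τ > 0 with Z + τΔ positive semidefinite and L(Z + τΔ) ≤ L(Z)}, and let σ_min = inf{ ‖A(Δ)‖₂ / ‖Δ‖_F : Δ ∈ D(L,Z), Δ ≠ 0 }. If σ_min > 0, then ‖X* − Z‖_F ≤ 2‖ε‖₂ / σ_min. -/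
open scoped ComplexOrder

/-- The Frobenius (Schatten-2) norm of a complex matrix. -/
noncomputable def frobNorm {T : ℕ} (M : Matrix (Fin T) (Fin T) ℂ) : ℝ :=
  Real.sqrt (∑ i, ∑ j, ‖M i j‖ ^ 2)

lemma frobNorm_nonneg {T : ℕ} (M : Matrix (Fin T) (Fin T) ℂ) : 0 ≤ frobNorm M :=
  Real.sqrt_nonneg _

/-- **Stability of PSD-constrained least squares via the descent cone.**
Let `A` be an ℝ-linear measurement map on matrices, `Z` PSD, `b = A(Z) + ε`,
and `X*` a PSD minimizer of `L(X) = ‖A(X) − b‖₂²` over the PSD cone.  With the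
descent cone `D(L,Z) = {Δ Hermitian : ∃ τ > 0, Z + τΔ PSD ∧ L(Z + τΔ) ≤ L(Z)}`
and smallest conic singular value
`σ_min = inf{‖A(Δ)‖₂/‖Δ‖_F : Δ ∈ D(L,Z), Δ ≠ 0}`, if `σ_min > 0`, then
`‖X* − Z‖_F ≤ 2‖ε‖₂/σ_min`. -/
theorem stmt10 (T m : ℕ)
    (A : Matrix (Fin T) (Fin T) ℂ →ₗ[ℝ] EuclideanSpace ℝ (Fin m))
    (Z : Matrix (Fin T) (Fin T) ℂ) (hZ : Z.PosSemidef)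
    (ε b : EuclideanSpace ℝ (Fin m)) (hb : b = A Z + ε)
    (L : Matrix (Fin T) (Fin T) ℂ → ℝ) (hL : ∀ X, L X = ‖A X - b‖ ^ 2)
    (Xstar : Matrix (Fin T) (Fin T) ℂ) (hXstarPSD : Xstar.PosSemidef)
    (hmin : ∀ X : Matrix (Fin T) (Fin T) ℂ, X.PosSemidef → L Xstar ≤ L X)
    (Dcone : Set (Matrix (Fin T) (Fin T) ℂ))
    (hD : Dcone = {Δ | Δ.IsHermitian ∧
      ∃ τ : ℝ, 0 < τ ∧ (Z + τ • Δ).PosSemidef ∧ L (Z + τ • Δ) ≤ L Z})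
    (σmin : ℝ)
    (hσ : σmin = sInf ((fun Δ => ‖A Δ‖ / frobNorm Δ) '' (Dcone \ {0})))
    (hσpos : 0 < σmin) :
    frobNorm (Xstar - Z) ≤ 2 * ‖ε‖ / σmin := by
  set Δ := Xstar - Z with hΔ
  by_cases h0 : Δ = 0
  · rw [h0]
    have : frobNorm (0 : Matrix (Fin T) (Fin T) ℂ) = 0 := by
      simp [frobNorm]
    rw [this]
    positivity
  -- Δ is in the descent cone
  have hL_le : L Xstar ≤ L Z := hmin Z hZ
  have hZΔ : Z + (1:ℝ) • Δ = Xstar := by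
    rw [one_smul, hΔ]; abel
  have hmem : Δ ∈ Dcone := by
    rw [hD]
    refine ⟨hXstarPSD.1.sub hZ.1, 1, one_pos, ?_, ?_⟩
    · rw [hZΔ]; exact hXstarPSD
    · rw [hZΔ]; exact hL_le
  -- σmin ≤ ‖A Δ‖ / frobNorm Δ
  have hσle : σmin ≤ ‖A Δ‖ / frobNorm Δ := by
    rw [hσ]
    apply csInf_le
    · refine ⟨0, ?_⟩
      rintro x ⟨y, _, rfl⟩
      exact div_nonneg (norm_nonneg _) (frobNorm_nonneg _)
    · exact ⟨Δ, ⟨hmem, h0⟩, rfl⟩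
  -- ‖A Δ‖ ≤ 2 ‖ε‖
  have hAZb : ‖A Z - b‖ = ‖ε‖ := by
    rw [hb]
    have : A Z - (A Z + ε) = -ε := by abel
    rw [this, norm_neg]
  have hXb : ‖A Xstar - b‖ ≤ ‖ε‖ := by
    have h2 : ‖A Xstar - b‖ ^ 2 ≤ ‖A Z - b‖ ^ 2 := by
      rw [← hL Xstar, ← hL Z]; exact hL_le
    rw [hAZb] at h2
    nlinarith [norm_nonneg (A Xstar - b), norm_nonneg ε]
  have hAΔ : ‖A Δ‖ ≤ 2 * ‖ε‖ := by
    have : A Δ = (A Xstar - b) + ε := by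
      rw [hΔ, map_sub, hb]; abel
    rw [this]
    calc ‖(A Xstar - b) + ε‖ ≤ ‖A Xstar - b‖ + ‖ε‖ := norm_add_le _ _
    _ ≤ ‖ε‖ + ‖ε‖ := by linarith
    _ = 2 * ‖ε‖ := by ring
  -- frobNorm Δ > 0
  have hf : 0 < frobNorm Δ := by
    rcases lt_or_eq_of_le (frobNorm_nonneg Δ) with h | h
    · exact h
    · exfalso
      rw [← h, div_zero] at hσle
      linarith
  have hmul : σmin * frobNorm Δ ≤ ‖A Δ‖ := (le_div_iff₀ hf).mp hσle
  rw [le_div_iff₀ hσpos]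
  nlinarith
end

section
/- Let T ≥ 1, K ∈ {1,…,T−1}, and let f ∈ ℂ^T lie in S_K with f_0 = 1. Let Z = f f† and define ĝ ∈ ℂ^T recursively as follows: ĝ_0 = 1; for i ≥ 1, if Z_{ii} = 0 set ĝ_i = 0, and otherwise set ĝ_i = √(Z_{ii}) · e^{i(arg(ĝ_j) − arg(Z_{ji}))}, where j is the largest index in {max(0, i−K), …, i−1} with f_j ≠ 0 (such j exists since f ∈ S_K, and then Z_{ji} = f_j · conj(f_i) ≠ 0 and ĝ_j ≠ 0). Then ĝ = f, i.e. the block-by-block algebraic estimator recovers the signal exactly from the noiseless K-band of the lifted matrix. -/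
/-- The signal class `S_K` for ℕ-indexed signals of length `T`: no run of `K`
consecutive zero entries. -/
def SignalClassNat (T K : ℕ) (f : ℕ → ℂ) : Prop :=
  ∀ s : ℕ, s + K ≤ T → ∃ j : ℕ, s ≤ j ∧ j < s + K ∧ f j ≠ 0

lemma key13 (A B : ℂ) (hA : A ≠ 0) (hB : B ≠ 0) :
    (Real.sqrt ((B * (starRingEnd ℂ) B).re) : ℂ) *
      Complex.exp (((Complex.arg A - Complex.arg (A * (starRingEnd ℂ) B)) : ℂ) * Complex.I) = B := by
  have h1 : (B * (starRingEnd ℂ) B).re = Complex.normSq B := by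
    rw [Complex.mul_conj]; simp
  have h2 : Real.sqrt ((B * (starRingEnd ℂ) B).re) = ‖B‖ := by
    rw [h1, Complex.norm_def]
  rw [h2]
  have hcB : (starRingEnd ℂ) B ≠ 0 := by simpa using hB
  have hAB : A * (starRingEnd ℂ) B ≠ 0 := mul_ne_zero hA hcB
  have habsA : (‖A‖ : ℂ) ≠ 0 := by
    simpa using (norm_ne_zero_iff.mpr hA)
  have habsB : (‖B‖ : ℂ) ≠ 0 := by
    simpa using (norm_ne_zero_iff.mpr hB)
  have e1 := Complex.norm_mul_exp_arg_mul_I A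
  have e2 := Complex.norm_mul_exp_arg_mul_I (A * (starRingEnd ℂ) B)
  have e1' : Complex.exp ((Complex.arg A : ℂ) * Complex.I) = A / (‖A‖) := by
    rw [eq_div_iff habsA]; linear_combination e1
  have e2' : Complex.exp ((Complex.arg (A * (starRingEnd ℂ) B) : ℂ) * Complex.I)
      = (A * (starRingEnd ℂ) B) / ((‖A‖ : ℂ) * (‖B‖ : ℂ)) := by
    have habs : (‖A * (starRingEnd ℂ) B‖ : ℂ)
        = (‖A‖ : ℂ) * (‖B‖ : ℂ) := by
      rw [norm_mul, Complex.norm_conj]; push_cast; ring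
    rw [eq_div_iff (mul_ne_zero habsA habsB), ← habs]
    linear_combination e2
  have hsub : ((Complex.arg A - Complex.arg (A * (starRingEnd ℂ) B)) : ℂ) * Complex.I
      = (Complex.arg A : ℂ) * Complex.I - (Complex.arg (A * (starRingEnd ℂ) B) : ℂ) * Complex.I := by
    ring
  rw [hsub, Complex.exp_sub, e1', e2']
  have hBB : (‖B‖ : ℂ) * (‖B‖ : ℂ) = B * (starRingEnd ℂ) B := by
    rw [Complex.mul_conj, Complex.normSq_eq_norm_sq]
    push_cast
    ring
  field_simp
  linear_combination hBB

/-- **Exact recovery of the block-by-block algebraic estimator (noiseless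
case).**  Let `f ∈ S_K` with `f_0 = 1` and `Z = f f†` (so `Z_{ji} = f_j conj f_i`).
Define `ĝ` recursively: `ĝ_0 = 1`; for `1 ≤ i < T`, if `Z_{ii} = 0` (i.e.
`f_i = 0`) set `ĝ_i = 0`, otherwise `ĝ_i = √(Z_{ii})·e^{i(arg ĝ_j − arg Z_{ji})}`
where `j` is the largest index in `{max(0, i−K), …, i−1}` with `f_j ≠ 0`.
Then `ĝ = f` on all indices `< T`. -/
theorem stmt13 (T K : ℕ) (hT : 1 ≤ T) (hK : 1 ≤ K) (hKT : K ≤ T - 1)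
    (f : ℕ → ℂ) (hfS : SignalClassNat T K f) (hf0 : f 0 = 1)
    (g : ℕ → ℂ) (hg0 : g 0 = 1)
    (hgrec : ∀ i, 1 ≤ i → i < T →
      (f i = 0 → g i = 0) ∧
      (f i ≠ 0 → ∀ j, j < i → i ≤ j + K → f j ≠ 0 →
        (∀ j', j < j' → j' < i → f j' = 0) →
        g i = (Real.sqrt ((f i * (starRingEnd ℂ) (f i)).re) : ℂ) *
          Complex.exp (((Complex.arg (g j) -
            Complex.arg (f j * (starRingEnd ℂ) (f i))) : ℂ) * Complex.I))) :
    ∀ i < T, g i = f i := by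
  classical
  intro i
  induction i using Nat.strong_induction_on with
  | _ i ih =>
    intro hiT
    rcases Nat.eq_zero_or_pos i with rfl | hi1
    · rw [hg0, hf0]
    · obtain ⟨hzero, hnz⟩ := hgrec i hi1 hiT
      by_cases hfi : f i = 0
      · rw [hzero hfi, hfi]
      · set j := Nat.findGreatest (fun j => f j ≠ 0) (i - 1) with hj
        have hf0' : f 0 ≠ 0 := by rw [hf0]; exact one_ne_zero
        have hfj : f j ≠ 0 := Nat.findGreatest_spec (P := fun j => f j ≠ 0) (Nat.zero_le _) hf0'
        have hjle : j ≤ i - 1 := Nat.findGreatest_le _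
        have hji : j < i := lt_of_le_of_lt hjle (by omega)
        have hgap : ∀ j', j < j' → j' < i → f j' = 0 := by
          intro j' h1 h2
          by_contra hne
          exact (Nat.findGreatest_is_greatest h1 (by omega)) hne
        have hiK : i ≤ j + K := by
          by_contra hlt
          push_neg at hlt
          obtain ⟨j', hj1, hj2, hj3⟩ := hfS (j + 1) (by omega)
          exact hj3 (hgap j' (by omega) (by omega))
        have hgj : g j = f j := ih j hji (lt_trans hji hiT)
        rw [hnz hfi j hji hiK hfj hgap, hgj]
        exact key13 (f j) (f i) hfj hfi
end

section
/- Let T ≥ 1, r ≥ 1, let ω_1, …, ω_r ∈ ℝ and p_1, …, p_r ≥ 0 with Σ_k p_k = 1, and define f_n = Σ_{k=1}^r p_k e^{−i ω_k n} for n = 0, …, T−1 and F[ℓ] = (1/√T)·Σ_{n=0}^{T−1} f_n e^{2πiℓn/T}. Fix k ∈ {1,…,r}, γ_ω > 0, and a grid index ℓ_k ∈ {0,…,T−1} such that |ω_k − 2πℓ_k/T| ≤ π/T and, for every j ≠ k, ω_j − 2πℓ_k/T ∈ [−π, π] with |ω_j − 2πℓ_k/T| ≥ γ_ω/2. Then |F[ℓ_k]|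 ≥ (2 p_k/π)·√T − (2π/γ_ω)·(1/√T). -/
open Real Complex Finset


private lemma key1 (θ : ℝ) : ‖Complex.exp (θ * Complex.I) - 1‖ = 2 * |Real.sin (θ/2)| := by
  have e1 : Complex.exp (↑(θ/2) * Complex.I) * Complex.exp (↑(θ/2) * Complex.I)
      = Complex.exp (↑θ * Complex.I) := by
    rw [← Complex.exp_add]; push_cast; ring_nf
  have e2 : Complex.exp (↑(θ/2) * Complex.I) * Complex.exp (-↑(θ/2) * Complex.I) = 1 := by
    rw [← Complex.exp_add]; ring_nf; exact Complex.exp_zero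
  have h : Complex.exp (↑θ * Complex.I) - 1
      = Complex.exp (↑(θ/2) * Complex.I) * (2 * Complex.I * Complex.sin ↑(θ/2)) := by
    rw [Complex.sin]
    rw [show (2:ℂ) * Complex.I * ((Complex.exp (-↑(θ/2) * Complex.I) - Complex.exp (↑(θ/2) * Complex.I)) * Complex.I / 2)
        = (Complex.I*Complex.I) * (Complex.exp (-↑(θ/2) * Complex.I) - Complex.exp (↑(θ/2) * Complex.I)) by ring]
    rw [Complex.I_mul_I]
    linear_combination e2 - e1
  rw [h, norm_mul, Complex.norm_exp_ofReal_mul_I, one_mul, ← Complex.ofReal_sin,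
    norm_mul, norm_mul, Complex.norm_two, Complex.norm_I, Complex.norm_real, Real.norm_eq_abs, mul_one]

private lemma key2 (T : ℕ) (x : ℝ) (hs : Real.sin (x/2) ≠ 0) :
    ‖∑ n ∈ Finset.range T, Complex.exp (-(↑x * n) * Complex.I)‖
      = |Real.sin (T * x / 2)| / |Real.sin (x / 2)| := by
  have hz : Complex.exp ((-x : ℝ) * Complex.I) ≠ 1 := by
    intro h
    have := key1 (-x)
    rw [h, sub_self, norm_zero] at this
    have : |Real.sin (-x/2)| = 0 := by linarith
    rw [show (-x)/2 = -(x/2) by ring, Real.sin_neg, abs_neg, abs_eq_zero] at this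
    exact hs this
  have hterm : ∀ n : ℕ, Complex.exp (-(↑x * n) * Complex.I)
      = Complex.exp ((-x : ℝ) * Complex.I) ^ n := by
    intro n
    rw [← Complex.exp_nat_mul]
    congr 1
    push_cast
    ring
  rw [Finset.sum_congr rfl fun n _ => hterm n, geom_sum_eq hz, norm_div,
    ← Complex.exp_nat_mul]
  have h1 : (T : ℂ) * ((-x : ℝ) * Complex.I) = ((-(T * x) : ℝ) : ℂ) * Complex.I := by
    push_cast; ring
  rw [h1, key1, key1]
  rw [show (-(T*x))/2 = -(T*x/2) by ring, show (-x)/2 = -(x/2) by ring,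
    Real.sin_neg, Real.sin_neg, abs_neg, abs_neg]
  rw [mul_div_mul_left _ _ (two_ne_zero)]

private lemma sin_half_ne (x : ℝ) (hx0 : x ≠ 0) (hx : |x| ≤ π) : Real.sin (x/2) ≠ 0 := by
  have hpi := Real.pi_pos
  rw [abs_le] at hx
  intro h
  rw [Real.sin_eq_zero_iff_of_lt_of_lt (by linarith) (by linarith)] at h
  exact hx0 (by linarith)

lemma keylow (T : ℕ) (hT : 1 ≤ T) (x : ℝ) (hx : |x| ≤ π / T) :
    2 / π * T ≤ ‖∑ n ∈ Finset.range T, Complex.exp (-(↑x * n) * Complex.I)‖ := by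
  have hpi := Real.pi_pos
  have hT0 : (0:ℝ) < T := by exact_mod_cast hT
  rcases eq_or_ne x 0 with rfl | hx0
  · simp only [Complex.ofReal_zero, zero_mul, neg_zero, Complex.exp_zero, Finset.sum_const,
      Finset.card_range, nsmul_eq_mul, mul_one, Complex.norm_natCast]
    have h2 : 2 / π ≤ 1 := by
      rw [div_le_one hpi]; linarith [Real.two_le_pi]
    nlinarith
  · have hT1 : (1:ℝ) ≤ T := by exact_mod_cast hT
    have hxpi : |x| ≤ π := hx.trans (by rw [div_le_iff₀ hT0]; nlinarith)
    have hs := sin_half_ne x hx0 hxpi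
    rw [key2 T x hs]
    have habs : (0:ℝ) < |x| := abs_pos.2 hx0
    have hden_pos : 0 < |Real.sin (x/2)| := abs_pos.2 hs
    have hden_le : |Real.sin (x/2)| ≤ |x| / 2 := by
      have := Real.abs_sin_le_abs (x := x/2)
      rwa [abs_div, _root_.abs_two] at this
    have hnum : 2 / π * (T * |x| / 2) ≤ |Real.sin (T * x / 2)| := by
      have h1 : |(T:ℝ) * x / 2| ≤ π / 2 := by
        rw [abs_div, abs_mul, _root_.abs_two, Nat.abs_cast, div_le_div_iff₀ two_pos two_pos]
        have : (T:ℝ) * |x| ≤ π := by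
          calc (T:ℝ) * |x| ≤ T * (π / T) := by nlinarith
          _ = π := by field_simp
        nlinarith
      have := Real.mul_abs_le_abs_sin h1
      rwa [abs_div, abs_mul, _root_.abs_two, Nat.abs_cast] at this
    rw [le_div_iff₀ hden_pos]
    calc 2 / π * T * |Real.sin (x/2)| ≤ 2 / π * T * (|x| / 2) := by
          apply mul_le_mul_of_nonneg_left hden_le; positivity
      _ = 2 / π * (T * |x| / 2) := by ring
      _ ≤ |Real.sin (T * x / 2)| := hnum

lemma keyup (T : ℕ) (x : ℝ) (hx0 : x ≠ 0) (hx : |x| ≤ π) :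
    ‖∑ n ∈ Finset.range T, Complex.exp (-(↑x * n) * Complex.I)‖ ≤ π / |x| := by
  have hpi := Real.pi_pos
  have hs := sin_half_ne x hx0 hx
  rw [key2 T x hs]
  have habs : (0:ℝ) < |x| := abs_pos.2 hx0
  have hden_ge : |x| / π ≤ |Real.sin (x/2)| := by
    have h1 : |x/2| ≤ π / 2 := by rw [abs_div, _root_.abs_two]; linarith
    have := Real.mul_abs_le_abs_sin h1
    rw [abs_div, _root_.abs_two] at this
    calc |x| / π = 2 / π * (|x| / 2) := by ring
      _ ≤ |Real.sin (x/2)| := this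
  have hden_pos : 0 < |x| / π := by positivity
  calc |Real.sin (T * x / 2)| / |Real.sin (x/2)| ≤ 1 / (|x| / π) := by
        apply div_le_div₀ (by positivity) (Real.abs_sin_le_one _) hden_pos hden_ge
    _ = π / |x| := by field_simp

/-- **Signal-minus-leakage bound at the grid point nearest a frequency.**  Let
`f_n = Σ_{k} p_k e^{−iω_k n}` with `p_k ≥ 0`, `Σ_k p_k = 1`, and let
`F[ℓ] = (1/√T)·Σ_{n=0}^{T−1} f_n e^{2πiℓn/T}` be the unitary DFT.  Fix `k` and
a grid index `ℓ_k` with `|ω_k − 2πℓ_k/T| ≤ π/T` and, for every `j ≠ k`,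
`ω_j − 2πℓ_k/T ∈ [−π, π]` with `|ω_j − 2πℓ_k/T| ≥ γ_ω/2`.  Then
`|F[ℓ_k]| ≥ (2p_k/π)·√T − (2π/γ_ω)·(1/√T)`. -/
theorem stmt18 (T r : ℕ) (hT : 1 ≤ T) (hr : 1 ≤ r)
    (ω p : Fin r → ℝ) (hp : ∀ k, 0 ≤ p k) (hsum : ∑ k, p k = 1)
    (f : ℕ → ℂ)
    (hf : ∀ n, f n = ∑ k, (p k : ℂ) * Complex.exp (-((ω k : ℂ) * (n : ℂ)) * Complex.I))
    (F : ℕ → ℂ)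
    (hF : ∀ ℓ, F ℓ = (1 / (Real.sqrt T : ℂ)) * ∑ n ∈ Finset.range T,
      f n * Complex.exp ((2 * (Real.pi : ℂ) * (ℓ : ℂ) * (n : ℂ) / (T : ℂ)) * Complex.I))
    (γω : ℝ) (hγ : 0 < γω)
    (k : Fin r) (ℓk : ℕ) (hℓk : ℓk < T)
    (hnear : |ω k - 2 * Real.pi * ℓk / T| ≤ Real.pi / T)
    (hfar : ∀ j, j ≠ k → |ω j - 2 * Real.pi * ℓk / T| ≤ Real.pi ∧
      γω / 2 ≤ |ω j - 2 * Real.pi * ℓk / T|) :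
    (2 * p k / Real.pi) * Real.sqrt T - (2 * Real.pi / γω) * (1 / Real.sqrt T) ≤
      ‖F ℓk‖ := by
  have hpi := Real.pi_pos
  have hT0 : (0:ℝ) < T := by exact_mod_cast hT
  have hsT : 0 < Real.sqrt T := Real.sqrt_pos.2 hT0
  have hsq : Real.sqrt T * Real.sqrt T = (T:ℝ) := Real.mul_self_sqrt hT0.le
  set S : Fin r → ℂ := fun j => ∑ n ∈ Finset.range T,
    Complex.exp (-(↑(ω j - 2 * Real.pi * ℓk / T) * n) * Complex.I) with hS
  have hFeq : F ℓk = (1 / (Real.sqrt T : ℂ)) * ∑ j, (p j : ℂ) * S j := by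
    rw [hF]
    congr 1
    simp_rw [hf, Finset.sum_mul]
    rw [Finset.sum_comm]
    refine Finset.sum_congr rfl fun j _ => ?_
    rw [hS, Finset.mul_sum]
    refine Finset.sum_congr rfl fun n _ => ?_
    rw [mul_assoc, ← Complex.exp_add]
    congr 1
    push_cast
    ring
  have habs1 : ‖1 / (Real.sqrt T : ℂ)‖ = 1 / Real.sqrt T := by
    rw [norm_div, norm_one, Complex.norm_real, Real.norm_eq_abs, _root_.abs_of_nonneg (Real.sqrt_nonneg _)]
  have hk_low : 2 / Real.pi * T ≤ ‖S k‖ := keylow T hT _ hnear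
  have hleak : ‖∑ j ∈ Finset.univ.erase k, (p j : ℂ) * S j‖ ≤ 2 * Real.pi / γω := by
    calc ‖∑ j ∈ Finset.univ.erase k, (p j : ℂ) * S j‖
        ≤ ∑ j ∈ Finset.univ.erase k, ‖(p j : ℂ) * S j‖ :=
          norm_sum_le _ _
      _ ≤ ∑ j ∈ Finset.univ.erase k, p j * (2 * Real.pi / γω) := by
          refine Finset.sum_le_sum fun j hj => ?_
          have hjk : j ≠ k := Finset.ne_of_mem_erase hj
          obtain ⟨h1, h2⟩ := hfar j hjk
          have hx0 : ω j - 2 * Real.pi * ℓk / T ≠ 0 := by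
            intro h; rw [h, abs_zero] at h2; linarith
          rw [norm_mul, Complex.norm_real, Real.norm_eq_abs, _root_.abs_of_nonneg (hp j)]
          refine mul_le_mul_of_nonneg_left ((keyup T _ hx0 h1).trans ?_) (hp j)
          rw [show 2 * Real.pi / γω = Real.pi / (γω / 2) by field_simp]
          exact div_le_div_of_nonneg_left hpi.le (by linarith) h2
      _ = (∑ j ∈ Finset.univ.erase k, p j) * (2 * Real.pi / γω) := by
          rw [Finset.sum_mul]
      _ ≤ 1 * (2 * Real.pi / γω) := by
          refine mul_le_mul_of_nonneg_right ?_ (by positivity)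
          rw [← hsum]
          exact Finset.sum_le_sum_of_subset_of_nonneg (Finset.subset_univ _)
            fun j _ _ => hp j
      _ = 2 * Real.pi / γω := one_mul _
  have hsplit : ∑ j, (p j : ℂ) * S j
      = (p k : ℂ) * S k + ∑ j ∈ Finset.univ.erase k, (p j : ℂ) * S j :=
    (Finset.add_sum_erase _ _ (Finset.mem_univ k)).symm
  have hA : p k * (2 / Real.pi * T) - 2 * Real.pi / γω
      ≤ ‖∑ j, (p j : ℂ) * S j‖ := by
    rw [hsplit]
    have h1 : ‖(p k : ℂ) * S k‖ = p k * ‖S k‖ := by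
      rw [norm_mul, Complex.norm_real, Real.norm_eq_abs, _root_.abs_of_nonneg (hp k)]
    have h2 := norm_sub_norm_le ((p k : ℂ) * S k)
      (-(∑ j ∈ Finset.univ.erase k, (p j : ℂ) * S j))
    rw [norm_neg, sub_neg_eq_add] at h2
    have h3 : p k * (2 / Real.pi * T) ≤ p k * ‖S k‖ :=
      mul_le_mul_of_nonneg_left hk_low (hp k)
    linarith [h1 ▸ h2]
  rw [hFeq, norm_mul, habs1]
  have key : (2 * p k / Real.pi) * Real.sqrt T - (2 * Real.pi / γω) * (1 / Real.sqrt T)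
      = (1 / Real.sqrt T) * (p k * (2 / Real.pi * T) - 2 * Real.pi / γω) := by
    set s := Real.sqrt (T:ℝ) with hs
    rw [← hsq]
    field_simp
  rw [key]
  exact mul_le_mul_of_nonneg_left hA (by positivity)
end

section
/- Let T ≥ 1, r ≥ 1, ω_1, …, ω_r ∈ ℝ, p_1, …, p_r ≥ 0 with Σ_k p_k = 1, f_n = Σ_{k=1}^r p_k e^{−i ω_k n}, and let f̂ ∈ ℂ^T satisfy ‖f̂ − f‖₂ ≤ ε for some ε > 0. Let F̂ and F denote the unitary DFTs of f̂ and f, so that |F̂[ℓ] − F[ℓ]| ≤ ε for every ℓ. Fix γ_ω > 0 and suppose: (a) for every k there is a grid index ℓ_k with |ω_k − 2πℓ_k/T| ≤ π/T and, for every j ≠ k, ω_j − 2πℓ_k/T ∈ [−π, π] with |ω_j − 2πℓ_k/T| ≥ γ_ω/2; (b) the signal-to-noise condition (2·min_k p_k / π)·√T > (4π/γ_ω)·(1/√T) + 2ε holds. Then for every k and every grid index ℓ such that ω_j − 2πℓ/T ∈ [−π, π] with |ω_j − 2πℓ/T| ≥ γ_ω/2 for all j, one has |F̂[ℓ_k]|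 > |F̂[ℓ]|, i.e. the Fourier amplitudes of the estimated signal at the grid points nearest the true frequencies strictly exceed the amplitudes at all grid points far from every frequency. -/
open Finset

lemma abs_exp_I_sub_one (θ : ℝ) :
    ‖Complex.exp ((θ : ℂ) * Complex.I) - 1‖ = 2 * |Real.sin (θ / 2)| := by
  have hre : (Complex.exp ((θ : ℂ) * Complex.I) - 1).re = Real.cos θ - 1 := by
    simp [Complex.exp_ofReal_mul_I_re]
  have him : (Complex.exp ((θ : ℂ) * Complex.I) - 1).im = Real.sin θ := by
    simp [Complex.exp_ofReal_mul_I_im]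
  rw [Complex.norm_def, Complex.normSq_apply, hre, him]
  have h1 := Real.sin_sq_eq_half_sub (θ / 2)
  rw [show 2 * (θ / 2) = θ by ring] at h1
  have h2 : |Real.sin (θ / 2)| ^ 2 = Real.sin (θ / 2) ^ 2 := sq_abs _
  have hs : ((Real.cos θ - 1) * (Real.cos θ - 1) + Real.sin θ * Real.sin θ)
      = (2 * |Real.sin (θ / 2)|) ^ 2 := by
    nlinarith [Real.sin_sq_add_cos_sq θ]
  rw [hs, Real.sqrt_sq (by positivity)]

lemma abs_geom_sum (T : ℕ) (x : ℝ) (hx : Real.sin (x / 2) ≠ 0) :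
    ‖∑ n ∈ Finset.range T, Complex.exp ((x : ℂ) * n * Complex.I)‖
      = |Real.sin (T * x / 2)| / |Real.sin (x / 2)| := by
  have hz : ∀ n : ℕ, Complex.exp ((x : ℂ) * n * Complex.I)
      = (Complex.exp ((x : ℂ) * Complex.I)) ^ n := by
    intro n
    rw [← Complex.exp_nat_mul]; ring_nf
  have hne : Complex.exp ((x : ℂ) * Complex.I) ≠ 1 := by
    intro h
    have h2 := abs_exp_I_sub_one x
    rw [h] at h2
    simp at h2
    exact hx h2
  have hgeo : ∑ n ∈ Finset.range T, Complex.exp ((x : ℂ) * n * Complex.I)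
      = (Complex.exp ((x : ℂ) * Complex.I) ^ T - 1) / (Complex.exp ((x : ℂ) * Complex.I) - 1) := by
    rw [Finset.sum_congr rfl (fun n _ => hz n)]
    exact geom_sum_eq hne T
  rw [hgeo, norm_div]
  have hT : Complex.exp ((x : ℂ) * Complex.I) ^ T = Complex.exp (((T * x : ℝ) : ℂ) * Complex.I) := by
    rw [← Complex.exp_nat_mul]; push_cast; ring_nf
  rw [hT, abs_exp_I_sub_one, abs_exp_I_sub_one,
    mul_div_mul_left _ _ (two_ne_zero)]

lemma abs_sin_le_abs' (t : ℝ) : |Real.sin t| ≤ |t| := by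
  rcases eq_or_ne t 0 with rfl | h
  · simp
  · have := Real.sin_sq_lt_sq h
    nlinarith [abs_nonneg t, abs_nonneg (Real.sin t), sq_abs t, sq_abs (Real.sin t)]

lemma peak_lb (T : ℕ) (hT : 1 ≤ T) (x : ℝ) (hx : |x| ≤ Real.pi / T) :
    2 / Real.pi * T ≤ ‖∑ n ∈ Finset.range T, Complex.exp ((x : ℂ) * n * Complex.I)‖ := by
  have hπ := Real.pi_pos
  have h2π := Real.two_le_pi
  have hT0 : (0 : ℝ) < T := by exact_mod_cast hT
  rcases eq_or_ne x 0 with rfl | hx0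
  · simp only [Complex.ofReal_zero, zero_mul, Complex.exp_zero, Finset.sum_const,
      Finset.card_range, nsmul_eq_mul, mul_one, Complex.norm_natCast]
    rw [div_mul_eq_mul_div, div_le_iff₀ hπ]
    nlinarith
  · have hxpos : 0 < |x| := abs_pos.mpr hx0
    have hxπ : |x| ≤ Real.pi := le_trans hx (div_le_self hπ.le (by exact_mod_cast hT))
    have habs2 : |x / 2| = |x| / 2 := by rw [abs_div]; norm_num
    have hhalf : |x / 2| ≤ Real.pi / 2 := by rw [habs2]; linarith
    have hsin_lb : 2 / Real.pi * (|x| / 2) ≤ |Real.sin (x / 2)| := by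
      have := Real.mul_abs_le_abs_sin hhalf
      rwa [habs2] at this
    have hsin_ne : Real.sin (x / 2) ≠ 0 := by
      intro h
      rw [h, abs_zero] at hsin_lb
      have : 0 < 2 / Real.pi * (|x| / 2) := by positivity
      linarith
    rw [abs_geom_sum T x hsin_ne]
    have hTx : |(T : ℝ) * x / 2| = (T : ℝ) * |x| / 2 := by
      rw [abs_div, abs_mul, Nat.abs_cast]; norm_num
    have hTxhalf : |(T : ℝ) * x / 2| ≤ Real.pi / 2 := by
      rw [hTx]
      rw [le_div_iff₀ hT0] at hx
      linarith
    have hnum : 2 / Real.pi * ((T : ℝ) * |x| / 2) ≤ |Real.sin ((T : ℝ) * x / 2)| := by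
      have := Real.mul_abs_le_abs_sin hTxhalf
      rwa [hTx] at this
    have hden : |Real.sin (x / 2)| ≤ |x| / 2 := by
      calc |Real.sin (x / 2)| ≤ |x / 2| := abs_sin_le_abs' _
        _ = |x| / 2 := habs2
    have hdpos : 0 < |Real.sin (x / 2)| := abs_pos.mpr hsin_ne
    rw [le_div_iff₀ hdpos]
    have h1 : 2 / Real.pi * (T : ℝ) * |Real.sin (x / 2)| ≤ 2 / Real.pi * (T : ℝ) * (|x| / 2) := by
      apply mul_le_mul_of_nonneg_left hden
      positivity
    calc 2 / Real.pi * (T : ℝ) * |Real.sin (x / 2)|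
        ≤ 2 / Real.pi * ((T : ℝ) * |x| / 2) := by rw [mul_assoc] at h1 ⊢; linarith [h1]
      _ ≤ |Real.sin ((T : ℝ) * x / 2)| := hnum

lemma far_ub (T : ℕ) (x γ : ℝ) (hγ : 0 < γ) (h1 : γ / 2 ≤ |x|) (h2 : |x| ≤ Real.pi) :
    ‖∑ n ∈ Finset.range T, Complex.exp ((x : ℂ) * n * Complex.I)‖
      ≤ 2 * Real.pi / γ := by
  have hπ := Real.pi_pos
  have habs2 : |x / 2| = |x| / 2 := by rw [abs_div]; norm_num
  have hhalf : |x / 2| ≤ Real.pi / 2 := by rw [habs2]; linarith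
  have hsin_lb : 2 / Real.pi * (|x| / 2) ≤ |Real.sin (x / 2)| := by
    have := Real.mul_abs_le_abs_sin hhalf
    rwa [habs2] at this
  have hxpos : 0 < |x| := lt_of_lt_of_le (by positivity) h1
  have hsin_ne : Real.sin (x / 2) ≠ 0 := by
    intro h
    rw [h, abs_zero] at hsin_lb
    have : 0 < 2 / Real.pi * (|x| / 2) := by positivity
    linarith
  rw [abs_geom_sum T x hsin_ne]
  have hdpos : 0 < |Real.sin (x / 2)| := abs_pos.mpr hsin_ne
  rw [div_le_iff₀ hdpos]
  have hnum : |Real.sin ((T : ℝ) * x / 2)| ≤ 1 := abs_le.mpr ⟨Real.neg_one_le_sin _, Real.sin_le_one _⟩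
  have hden : γ / (2 * Real.pi) ≤ |Real.sin (x / 2)| := by
    calc γ / (2 * Real.pi) ≤ 2 / Real.pi * (|x| / 2) := by
          rw [div_le_iff₀ (by positivity)]
          have : 2 / Real.pi * (|x| / 2) * (2 * Real.pi) = 2 * |x| := by field_simp
          rw [this]; linarith
      _ ≤ |Real.sin (x / 2)| := hsin_lb
  calc |Real.sin ((T : ℝ) * x / 2)| ≤ 1 := hnum
    _ ≤ 2 * Real.pi / γ * |Real.sin (x / 2)| := by
        have hc : 2 * Real.pi / γ * (γ / (2 * Real.pi)) = 1 := by field_simp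
        calc (1 : ℝ) = 2 * Real.pi / γ * (γ / (2 * Real.pi)) := hc.symm
          _ ≤ 2 * Real.pi / γ * |Real.sin (x / 2)| := by
              apply mul_le_mul_of_nonneg_left hden; positivity

lemma sum_abs_le_sqrt (T : ℕ) (g : ℕ → ℂ) :
    ∑ n ∈ Finset.range T, ‖g n‖
      ≤ Real.sqrt T * Real.sqrt (∑ n ∈ Finset.range T, ‖g n‖ ^ 2) := by
  have csq := Finset.sum_mul_sq_le_sq_mul_sq (Finset.range T)
    (fun _ => (1 : ℝ)) (fun n => ‖g n‖)
  simp only [one_mul, one_pow, Finset.sum_const, Finset.card_range, nsmul_eq_mul, mul_one] at csq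
  have hb : (0 : ℝ) ≤ ∑ n ∈ Finset.range T, ‖g n‖ :=
    Finset.sum_nonneg fun n _ => (norm_nonneg _)
  calc ∑ n ∈ Finset.range T, ‖g n‖
      = Real.sqrt ((∑ n ∈ Finset.range T, ‖g n‖) ^ 2) := (Real.sqrt_sq hb).symm
    _ ≤ Real.sqrt ((T : ℝ) * ∑ n ∈ Finset.range T, ‖g n‖ ^ 2) :=
        Real.sqrt_le_sqrt csq
    _ = Real.sqrt T * Real.sqrt (∑ n ∈ Finset.range T, ‖g n‖ ^ 2) :=
        Real.sqrt_mul (by positivity) _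

lemma abs_add_lower (a b : ℂ) : ‖a‖ - ‖b‖ ≤ ‖a + b‖ := by
  have h := norm_add_le (a + b) (-b)
  rw [add_neg_cancel_right, norm_neg] at h
  linarith

/-- **Peak detectability in the DFT of the estimated signal.**  Let
`f_n = Σ_k p_k e^{−iω_k n}` (with `p_k ≥ 0`, `Σ_k p_k = 1`) and let
`f̂ ∈ ℂ^T` satisfy `‖f̂ − f‖₂ ≤ ε`.  Let `F̂` be the unitary DFT of `f̂`.
Suppose (a) every frequency `ω_k` has a grid index `ℓ_k` with
`|ω_k − 2πℓ_k/T| ≤ π/T` and `ω_j − 2πℓ_k/T ∈ [−π, π]`,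
`|ω_j − 2πℓ_k/T| ≥ γ_ω/2` for all `j ≠ k`; and (b) the signal-to-noise
condition `(2·min_k p_k/π)·√T > (4π/γ_ω)·(1/√T) + 2ε` holds.  Then for every
`k` and every grid index `ℓ < T` that is `γ_ω/2`-far (within `[−π, π]`) from
every frequency, `|F̂[ℓ]| < |F̂[ℓ_k]|`. -/
theorem stmt19 (T r : ℕ) (hT : 1 ≤ T) (hr : 1 ≤ r)
    (ω p : Fin r → ℝ) (hp : ∀ k, 0 ≤ p k) (hsum : ∑ k, p k = 1)
    (f : ℕ → ℂ)
    (hf : ∀ n, f n = ∑ k, (p k : ℂ) * Complex.exp (-((ω k : ℂ) * (n : ℂ)) * Complex.I))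
    (fhat : ℕ → ℂ) (ε : ℝ) (hε : 0 < ε)
    (herr : Real.sqrt (∑ n ∈ Finset.range T, ‖fhat n - f n‖ ^ 2) ≤ ε)
    (Fhat : ℕ → ℂ)
    (hFhat : ∀ ℓ, Fhat ℓ = (1 / (Real.sqrt T : ℂ)) * ∑ n ∈ Finset.range T,
      fhat n * Complex.exp ((2 * (Real.pi : ℂ) * (ℓ : ℂ) * (n : ℂ) / (T : ℂ)) * Complex.I))
    (γω : ℝ) (hγ : 0 < γω)
    (ℓk : Fin r → ℕ) (hℓkT : ∀ k, ℓk k < T)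
    (hnear : ∀ k, |ω k - 2 * Real.pi * (ℓk k) / T| ≤ Real.pi / T)
    (hsep : ∀ k, ∀ j, j ≠ k → |ω j - 2 * Real.pi * (ℓk k) / T| ≤ Real.pi ∧
      γω / 2 ≤ |ω j - 2 * Real.pi * (ℓk k) / T|)
    (hSNR : (4 * Real.pi / γω) * (1 / Real.sqrt T) + 2 * ε <
      (2 * (Finset.univ.inf' (Finset.univ_nonempty_iff.mpr
        (Fin.pos_iff_nonempty.mp (by omega))) p) / Real.pi) * Real.sqrt T) :
    ∀ k : Fin r, ∀ ℓ : ℕ, ℓ < T →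
      (∀ j, |ω j - 2 * Real.pi * ℓ / T| ≤ Real.pi ∧
        γω / 2 ≤ |ω j - 2 * Real.pi * ℓ / T|) →
      ‖Fhat ℓ‖ < ‖Fhat (ℓk k)‖ := by
  intro k ℓ hℓT hfar
  have hπ := Real.pi_pos
  have hT0 : (0 : ℝ) < T := by exact_mod_cast hT
  have hA : (0 : ℝ) < Real.sqrt T := Real.sqrt_pos.mpr hT0
  set A : ℝ := Real.sqrt T with hAdef
  have hA2 : A ^ 2 = T := Real.sq_sqrt hT0.le
  have hAne : (A : ℂ) ≠ 0 := by
    simpa using (Complex.ofReal_ne_zero.mpr hA.ne')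
  -- noiseless DFT
  set F : ℕ → ℂ := fun m => (1 / (A : ℂ)) * ∑ n ∈ Finset.range T,
      f n * Complex.exp ((2 * (Real.pi : ℂ) * (m : ℂ) * (n : ℂ) / (T : ℂ)) * Complex.I) with hF
  -- Step 1: error bound per frequency
  have herr' : ∀ m : ℕ, ‖Fhat m - F m‖ ≤ ε := by
    intro m
    have hdiff : Fhat m - F m = (1 / (A : ℂ)) * ∑ n ∈ Finset.range T,
        (fhat n - f n) * Complex.exp ((2 * (Real.pi : ℂ) * (m : ℂ) * (n : ℂ) / (T : ℂ)) * Complex.I) := by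
      rw [hFhat m]
      simp only [hF]
      rw [← mul_sub, ← Finset.sum_sub_distrib]
      congr 1
      apply Finset.sum_congr rfl
      intro n _
      ring
    rw [hdiff, norm_mul, norm_div, norm_one]
    have hAabs : ‖(A : ℂ)‖ = A := by
      rw [Complex.norm_real, Real.norm_eq_abs, abs_of_pos hA]
    rw [hAabs]
    have hsum_le : ‖∑ n ∈ Finset.range T,
        (fhat n - f n) * Complex.exp ((2 * (Real.pi : ℂ) * (m : ℂ) * (n : ℂ) / (T : ℂ)) * Complex.I)‖
        ≤ ∑ n ∈ Finset.range T, ‖fhat n - f n‖ := by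
      calc ‖∑ n ∈ Finset.range T, (fhat n - f n) *
            Complex.exp ((2 * (Real.pi : ℂ) * (m : ℂ) * (n : ℂ) / (T : ℂ)) * Complex.I)‖
          ≤ ∑ n ∈ Finset.range T, ‖(fhat n - f n) *
            Complex.exp ((2 * (Real.pi : ℂ) * (m : ℂ) * (n : ℂ) / (T : ℂ)) * Complex.I)‖ :=
            norm_sum_le _ _
        _ = ∑ n ∈ Finset.range T, ‖fhat n - f n‖ := by
            apply Finset.sum_congr rfl
            intro n _
            rw [norm_mul]
            have : (2 * (Real.pi : ℂ) * (m : ℂ) * (n : ℂ) / (T : ℂ)) * Complex.I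
                = ((2 * Real.pi * m * n / T : ℝ) : ℂ) * Complex.I := by push_cast; ring
            rw [this, Complex.norm_exp_ofReal_mul_I, mul_one]
    have hcs := sum_abs_le_sqrt T (fun n => fhat n - f n)
    have : ‖∑ n ∈ Finset.range T,
        (fhat n - f n) * Complex.exp ((2 * (Real.pi : ℂ) * (m : ℂ) * (n : ℂ) / (T : ℂ)) * Complex.I)‖
        ≤ A * ε := by
      calc _ ≤ ∑ n ∈ Finset.range T, ‖fhat n - f n‖ := hsum_le
        _ ≤ A * Real.sqrt (∑ n ∈ Finset.range T, ‖fhat n - f n‖ ^ 2) := hcs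
        _ ≤ A * ε := mul_le_mul_of_nonneg_left herr hA.le
    calc 1 / A * ‖_‖ ≤ 1 / A * (A * ε) := by
          apply mul_le_mul_of_nonneg_left this
          positivity
      _ = ε := by field_simp
  -- Step 2: decomposition of F into Dirichlet kernels
  set S : ℝ → ℂ := fun x => ∑ n ∈ Finset.range T, Complex.exp ((x : ℂ) * n * Complex.I) with hS
  have hFdecomp : ∀ m : ℕ, F m = (1 / (A : ℂ)) * ∑ j, (p j : ℂ) * S (2 * Real.pi * m / T - ω j) := by
    intro m
    simp only [hF]
    congr 1
    rw [Finset.sum_congr rfl (fun n _ => by rw [hf n, Finset.sum_mul])]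
    rw [Finset.sum_comm]
    apply Finset.sum_congr rfl
    intro j _
    simp only [hS]
    rw [Finset.mul_sum]
    apply Finset.sum_congr rfl
    intro n _
    rw [mul_assoc, ← Complex.exp_add]
    congr 1
    push_cast
    ring
  -- Step 3: far bound
  have hfar_bd : ∀ j, ‖S (2 * Real.pi * ℓ / T - ω j)‖ ≤ 2 * Real.pi / γω := by
    intro j
    apply far_ub T _ γω hγ
    · rw [abs_sub_comm]; exact (hfar j).2
    · rw [abs_sub_comm]; exact (hfar j).1
  have hFfar : A * ‖F ℓ‖ ≤ 2 * Real.pi / γω := by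
    rw [hFdecomp ℓ, norm_mul, norm_div, norm_one]
    have hAabs : ‖(A : ℂ)‖ = A := by rw [Complex.norm_real, Real.norm_eq_abs, abs_of_pos hA]
    rw [hAabs]
    have hsum_bd : ‖∑ j, (p j : ℂ) * S (2 * Real.pi * ℓ / T - ω j)‖
        ≤ 2 * Real.pi / γω := by
      calc ‖∑ j, (p j : ℂ) * S (2 * Real.pi * ℓ / T - ω j)‖
          ≤ ∑ j, ‖(p j : ℂ) * S (2 * Real.pi * ℓ / T - ω j)‖ :=
            norm_sum_le _ _
        _ ≤ ∑ j, p j * (2 * Real.pi / γω) := by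
            apply Finset.sum_le_sum
            intro j _
            rw [norm_mul, Complex.norm_real, Real.norm_eq_abs, abs_of_nonneg (hp j)]
            exact mul_le_mul_of_nonneg_left (hfar_bd j) (hp j)
        _ = 2 * Real.pi / γω := by rw [← Finset.sum_mul, hsum, one_mul]
    calc A * (1 / A * ‖∑ j, (p j : ℂ) * S (2 * Real.pi * ℓ / T - ω j)‖)
        = ‖∑ j, (p j : ℂ) * S (2 * Real.pi * ℓ / T - ω j)‖ := by field_simp
      _ ≤ 2 * Real.pi / γω := hsum_bd
  -- Step 4: peak bound
  have hpeak : p k * (2 / Real.pi) * (T : ℝ) - 2 * Real.pi / γω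
      ≤ A * ‖F (ℓk k)‖ := by
    have hAabs : ‖(A : ℂ)‖ = A := by rw [Complex.norm_real, Real.norm_eq_abs, abs_of_pos hA]
    have hkey : p k * (2 / Real.pi) * (T : ℝ) - 2 * Real.pi / γω
        ≤ ‖∑ j, (p j : ℂ) * S (2 * Real.pi * (ℓk k) / T - ω j)‖ := by
      have hsplit : ∑ j, (p j : ℂ) * S (2 * Real.pi * (ℓk k) / T - ω j)
          = (p k : ℂ) * S (2 * Real.pi * (ℓk k) / T - ω k)
            + ∑ j ∈ Finset.univ.erase k, (p j : ℂ) * S (2 * Real.pi * (ℓk k) / T - ω j) :=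
        (Finset.add_sum_erase _ _ (Finset.mem_univ k)).symm
      have hlow := abs_add_lower ((p k : ℂ) * S (2 * Real.pi * (ℓk k) / T - ω k))
        (∑ j ∈ Finset.univ.erase k, (p j : ℂ) * S (2 * Real.pi * (ℓk k) / T - ω j))
      rw [← hsplit] at hlow
      have hfirst : p k * (2 / Real.pi * (T : ℝ))
          ≤ ‖(p k : ℂ) * S (2 * Real.pi * (ℓk k) / T - ω k)‖ := by
        rw [norm_mul, Complex.norm_real, Real.norm_eq_abs, abs_of_nonneg (hp k)]
        apply mul_le_mul_of_nonneg_left _ (hp k)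
        apply peak_lb T hT
        rw [abs_sub_comm]
        exact hnear k
      have hrest : ‖∑ j ∈ Finset.univ.erase k,
          (p j : ℂ) * S (2 * Real.pi * (ℓk k) / T - ω j)‖ ≤ 2 * Real.pi / γω := by
        calc ‖∑ j ∈ Finset.univ.erase k,
              (p j : ℂ) * S (2 * Real.pi * (ℓk k) / T - ω j)‖
            ≤ ∑ j ∈ Finset.univ.erase k,
              ‖(p j : ℂ) * S (2 * Real.pi * (ℓk k) / T - ω j)‖ :=
              norm_sum_le _ _
          _ ≤ ∑ j ∈ Finset.univ.erase k, p j * (2 * Real.pi / γω) := by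
              apply Finset.sum_le_sum
              intro j hj
              have hjk : j ≠ k := (Finset.mem_erase.mp hj).1
              rw [norm_mul, Complex.norm_real, Real.norm_eq_abs, abs_of_nonneg (hp j)]
              apply mul_le_mul_of_nonneg_left _ (hp j)
              apply far_ub T _ γω hγ
              · rw [abs_sub_comm]; exact (hsep k j hjk).2
              · rw [abs_sub_comm]; exact (hsep k j hjk).1
          _ = (1 - p k) * (2 * Real.pi / γω) := by
              rw [← Finset.sum_mul]
              congr 1
              have := Finset.add_sum_erase Finset.univ p (Finset.mem_univ k)
              rw [hsum] at this
              linarith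
          _ ≤ 2 * Real.pi / γω := by
              have h1 : 0 ≤ p k * (2 * Real.pi / γω) :=
                mul_nonneg (hp k) (by positivity)
              nlinarith [hp k]
      have hform : p k * (2 / Real.pi) * (T : ℝ) = p k * (2 / Real.pi * (T : ℝ)) := by ring
      rw [hform]
      linarith
    rw [hFdecomp (ℓk k), norm_mul, norm_div, norm_one, hAabs]
    calc p k * (2 / Real.pi) * (T : ℝ) - 2 * Real.pi / γω
        ≤ ‖∑ j, (p j : ℂ) * S (2 * Real.pi * (ℓk k) / T - ω j)‖ := hkey
      _ = A * (1 / A * ‖∑ j, (p j : ℂ) * S (2 * Real.pi * (ℓk k) / T - ω j)‖) := by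
          field_simp
  -- Step 5: conclude
  have hD : ‖Fhat ℓ‖ ≤ ‖F ℓ‖ + ε := by
    calc ‖Fhat ℓ‖ = ‖F ℓ + (Fhat ℓ - F ℓ)‖ := by
            congr 1; abel
      _ ≤ ‖F ℓ‖ + ‖Fhat ℓ - F ℓ‖ := norm_add_le _ _
      _ ≤ ‖F ℓ‖ + ε := by linarith [herr' ℓ]
  have hC : ‖F (ℓk k)‖ - ε ≤ ‖Fhat (ℓk k)‖ := by
    have : ‖F (ℓk k)‖ ≤ ‖Fhat (ℓk k)‖ + ε := by
      calc ‖F (ℓk k)‖ = ‖Fhat (ℓk k) + (F (ℓk k) - Fhat (ℓk k))‖ := by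
            congr 1; abel
        _ ≤ ‖Fhat (ℓk k)‖ + ‖F (ℓk k) - Fhat (ℓk k)‖ :=
            norm_add_le _ _
        _ ≤ ‖Fhat (ℓk k)‖ + ε := by
            have := herr' (ℓk k)
            rw [← norm_sub_rev] at this
            linarith
    linarith
  set pmin : ℝ := (Finset.univ.inf' (Finset.univ_nonempty_iff.mpr
      (Fin.pos_iff_nonempty.mp (by omega))) p) with hpmin
  have hpm : pmin ≤ p k := Finset.inf'_le _ (Finset.mem_univ k)
  rw [← mul_lt_mul_iff_right₀ hA]
  have hgoal1 : A * ‖Fhat ℓ‖ ≤ 2 * Real.pi / γω + A * ε := by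
    calc A * ‖Fhat ℓ‖ ≤ A * (‖F ℓ‖ + ε) :=
          mul_le_mul_of_nonneg_left hD hA.le
      _ = A * ‖F ℓ‖ + A * ε := by ring
      _ ≤ 2 * Real.pi / γω + A * ε := by linarith
  have hgoal2 : p k * (2 / Real.pi) * (T : ℝ) - 2 * Real.pi / γω - A * ε
      ≤ A * ‖Fhat (ℓk k)‖ := by
    calc p k * (2 / Real.pi) * (T : ℝ) - 2 * Real.pi / γω - A * ε
        ≤ A * ‖F (ℓk k)‖ - A * ε := by linarith
      _ = A * (‖F (ℓk k)‖ - ε) := by ring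
      _ ≤ A * ‖Fhat (ℓk k)‖ := mul_le_mul_of_nonneg_left hC hA.le
  -- SNR in multiplied form
  have hSNR' : 4 * Real.pi / γω + 2 * ε * A < pmin * (2 / Real.pi) * (T : ℝ) := by
    have := mul_lt_mul_of_pos_left hSNR hA
    rw [mul_add] at this
    have e1 : A * ((4 * Real.pi / γω) * (1 / A)) = 4 * Real.pi / γω := by
      field_simp
    have e2 : A * ((2 * pmin / Real.pi) * A) = pmin * (2 / Real.pi) * (T : ℝ) := by
      rw [← hA2]; ring
    have e3 : A * (2 * ε) = 2 * ε * A := by ring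
    rw [e1, e2, e3] at this
    linarith
  have hmono : pmin * (2 / Real.pi) * (T : ℝ) ≤ p k * (2 / Real.pi) * (T : ℝ) := by
    have h2π : (0:ℝ) ≤ 2 / Real.pi := by positivity
    apply mul_le_mul_of_nonneg_right _ hT0.le
    exact mul_le_mul_of_nonneg_right hpm h2π
  ring_nf at hgoal1 hgoal2 hSNR' hmono ⊢
  linarith [hgoal1, hgoal2, hSNR', hmono]
end
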